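/- arXiv:1005.5127 — 7 statements merged into one kernel-verified Lean document; each statement's English description precedes it below -/
import Mathlib

section
/- Let θ : ℝ^d → [0,∞) be a log-concave, locally Lebesgue-integrable function and let ρ be the measure on ℝ^d with density θ with respect to Lebesgue measure. Then ρ satisfies the Prékopa–Leindler property: for all s, t ≥ 0 with s + t = 1 and all nonnegative continuous compactly supported functions a, b, c on ℝ^d such that a(s·x + t·y) ≥ b(x)^s · c(y)^t for all x, y ∈ ℝ^d, one has ∫ a dρ ≥ (∫ b dρ)^s · (∫ c dρ)^t. -/
open MeasureTheory Pointwise ENNReal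

noncomputable section

/-- A nonnegative function is log-concave if `f x ^ s * f y ^ t ≤ f (s • x + t • y)`
for all `x, y` and all `s, t ≥ 0` with `s + t = 1`. -/
def IsLogConcave {E : Type*} [AddCommGroup E] [Module ℝ E] (f : E → ℝ) : Prop :=
  ∀ x y : E, ∀ s t : ℝ, 0 ≤ s → 0 ≤ t → s + t = 1 →
    f x ^ s * f y ^ t ≤ f (s • x + t • y)

/-- The Prékopa–Leindler property of a measure, tested on nonnegative continuous
compactly supported functions. -/
def PrekopaLeindler {E : Type*} [AddCommGroup E] [Module ℝ E] [TopologicalSpace E]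
    [MeasurableSpace E] (ρ : Measure E) : Prop :=
  ∀ s t : ℝ, 0 ≤ s → 0 ≤ t → s + t = 1 →
    ∀ a b c : E → ℝ, Continuous a → Continuous b → Continuous c →
      HasCompactSupport a → HasCompactSupport b → HasCompactSupport c →
      (∀ x, 0 ≤ a x) → (∀ x, 0 ≤ b x) → (∀ x, 0 ≤ c x) →
      (∀ x y, b x ^ s * c y ^ t ≤ a (s • x + t • y)) →
      (∫ x, b x ∂ρ) ^ s * (∫ x, c x ∂ρ) ^ t ≤ ∫ x, a x ∂ρ

/-!
On `ℝ`, normalise `f` and `g` to a common supremum. Then for every level `r` the superlevel sets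
satisfy `s • {f > r} + t • {g > r} ⊆ {h > r}`, so the one-dimensional Brunn–Minkowski inequality
`|A| + |B| ≤ |A + B|` and the layer-cake formula give `s ∫ f + t ∫ g ≤ ∫ h`, whence the
multiplicative form by AM–GM. Fubini tensorises the inequality to `ℝⁿ`. A log-concave density `θ`
is absorbed into the functions, since `f θ`, `g θ`, `h θ` satisfy the same hypothesis. As `θ` need
not be Borel, it is first replaced by its restriction to the interior of the convex set `{θ > 0}`,
which is still log-concave and differs from `θ` only on the null frontier of that set.
-/
open Set

namespace ENNReal

theorem rpow_mul_rpow_le_add {a b : ℝ≥0∞} {s t : ℝ} (hs : 0 < s) (ht : 0 < t) (hst : s + t = 1) :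
    a ^ s * b ^ t ≤ ENNReal.ofReal s * a + ENNReal.ofReal t * b := by
  have := young_inequality (a ^ s) (b ^ t) (Real.HolderConjugate.inv_inv hs ht hst)
  rwa [rpow_rpow_inv hs.ne', rpow_rpow_inv ht.ne', ofReal_inv_of_pos hs, ofReal_inv_of_pos ht,
    div_eq_mul_inv, div_eq_mul_inv, inv_inv, inv_inv, mul_comm a, mul_comm b] at this

theorem ofReal_rpow_mul_ofReal_rpow {x y s t : ℝ} (hx : 0 ≤ x) (hy : 0 ≤ y) (hs : 0 ≤ s)
    (ht : 0 ≤ t) :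
    ENNReal.ofReal x ^ s * ENNReal.ofReal y ^ t = ENNReal.ofReal (x ^ s * y ^ t) := by
  rw [ofReal_rpow_of_nonneg hx hs, ofReal_rpow_of_nonneg hy ht,
    ofReal_mul (Real.rpow_nonneg hx s)]

theorem iSup_inf_natCast (a : ℝ≥0∞) : ⨆ n : ℕ, a ⊓ n = a := by
  rw [← inf_iSup_eq, iSup_natCast, inf_top_eq]

theorem rpow_iSup_mul_rpow_iSup_le {a b : ℕ → ℝ≥0∞} {c : ℝ≥0∞} {s t : ℝ} (hs : 0 < s)
    (ht : 0 < t) (ha : Monotone a) (hb : Monotone b) (h : ∀ n, a n ^ s * b n ^ t ≤ c) :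
    (⨆ n, a n) ^ s * (⨆ n, b n) ^ t ≤ c := by
  have hsup : ∀ {u : ℝ}, (hu : 0 < u) → ∀ v : ℕ → ℝ≥0∞, (⨆ n, v n) ^ u = ⨆ n, v n ^ u :=
    fun hu v => (orderIsoRpow _ hu).map_iSup v
  rw [hsup hs, hsup ht, ENNReal.iSup_mul]
  refine iSup_le fun m => ?_
  rw [ENNReal.mul_iSup]
  refine iSup_le fun n => le_trans ?_ (h (max m n))
  exact mul_le_mul' (rpow_le_rpow (ha (le_max_left m n)) hs.le)
    (rpow_le_rpow (hb (le_max_right m n)) ht.le)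

end ENNReal

theorem Real.volume_add_volume_le_of_isCompact {K L : Set ℝ} (hK : IsCompact K) (hL : IsCompact L)
    (hKne : K.Nonempty) (hLne : L.Nonempty) :
    volume K + volume L ≤ volume (K + L) := by
  set k := sSup K
  set l := sInf L
  have hk : k ∈ K := hK.sSup_mem hKne
  have hl : l ∈ L := hL.sInf_mem hLne
  -- `l +ᵥ K` lies left of `k + l` and `k +ᵥ L` right of it.
  have hinter : (l +ᵥ K) ∩ (k +ᵥ L) ⊆ {k + l} := by
    rintro _ ⟨⟨x, hx, rfl⟩, ⟨y, hy, hxy⟩⟩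
    have := le_csSup hK.bddAbove hx
    have := csInf_le hL.bddBelow hy
    simp only [vadd_eq_add, mem_singleton_iff] at hxy ⊢
    linarith
  have hunion : (l +ᵥ K) ∪ (k +ᵥ L) ⊆ K + L := union_subset
    (by rintro _ ⟨x, hx, rfl⟩; exact ⟨x, hx, l, hl, add_comm x l⟩)
    (by rintro _ ⟨y, hy, rfl⟩; exact ⟨k, hk, y, hy, rfl⟩)
  calc volume K + volume L = volume (l +ᵥ K) + volume (k +ᵥ L) := by
        rw [measure_vadd, measure_vadd]
    _ = volume ((l +ᵥ K) ∪ (k +ᵥ L)) + volume ((l +ᵥ K) ∩ (k +ᵥ L)) :=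
        (measure_union_add_inter _ (hL.vadd k).isClosed.measurableSet).symm
    _ ≤ volume (K + L) + volume {k + l} := by gcongr
    _ = volume (K + L) := by rw [Real.volume_singleton, add_zero]

theorem Real.volume_add_volume_le {A B : Set ℝ} (hA : MeasurableSet A) (hB : MeasurableSet B)
    (hAne : A.Nonempty) (hBne : B.Nonempty) :
    volume A + volume B ≤ volume (A + B) := by
  obtain ⟨a, ha⟩ := hAne
  obtain ⟨b, hb⟩ := hBne
  have hcompact : ∀ K ⊆ A, IsCompact K → ∀ L ⊆ B, IsCompact L →
      volume K + volume L ≤ volume (A + B) := fun K hKA hK L hLB hL =>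
    calc volume K + volume L ≤ volume (insert a K) + volume (insert b L) := by
          gcongr <;> exact subset_insert _ _
      _ ≤ volume (insert a K + insert b L) :=
          volume_add_volume_le_of_isCompact (hK.insert a) (hL.insert b)
            (insert_nonempty _ _) (insert_nonempty _ _)
      _ ≤ volume (A + B) :=
          measure_mono (add_subset_add (insert_subset ha hKA) (insert_subset hb hLB))
  rw [hA.measure_eq_iSup_isCompact, hB.measure_eq_iSup_isCompact]
  simp only [iSup_and']
  exact ENNReal.biSup_add_biSup_le' ⟨∅, empty_subset _, isCompact_empty⟩
    ⟨∅, empty_subset _, isCompact_empty⟩ fun K hK L hL => hcompact K hK.1 hK.2 L hL.1 hL.2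

theorem lintegral_eq_lintegral_Ioi_measure_lt {α : Type*} [MeasurableSpace α] (μ : Measure α)
    [SFinite μ] {f : α → ℝ≥0∞} (hf : Measurable f) :
    ∫⁻ x, f x ∂μ = ∫⁻ r in Ioi (0 : ℝ), μ {x | ENNReal.ofReal r < f x} := by
  set S := {p : α × ℝ | ENNReal.ofReal p.2 < f p.1}
  have hS : MeasurableSet S :=
    measurableSet_lt (ENNReal.measurable_ofReal.comp measurable_snd) (hf.comp measurable_fst)
  have hsection : ∀ a : ℝ≥0∞, volume ({r : ℝ | ENNReal.ofReal r < a} ∩ Ioi 0) = a := by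
    intro a
    rcases eq_or_ne a ∞ with rfl | ha
    · simp
    · have : {r : ℝ | ENNReal.ofReal r < a} ∩ Ioi 0 = Ioo 0 a.toReal := by
        ext r
        simp only [mem_inter_iff, mem_ofPred_eq, mem_Ioi, mem_Ioo]
        exact ⟨fun h => ⟨h.2, (ENNReal.ofReal_lt_iff_lt_toReal h.2.le ha).1 h.1⟩,
          fun h => ⟨(ENNReal.ofReal_lt_iff_lt_toReal h.1.le ha).2 h.2, h.1⟩⟩
      rw [this, Real.volume_Ioo, sub_zero, ENNReal.ofReal_toReal ha]
  calc ∫⁻ x, f x ∂μ = ∫⁻ x, (∫⁻ r in Ioi (0 : ℝ), S.indicator 1 (x, r)) ∂μ := by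
        refine lintegral_congr fun x => ?_
        rw [← hsection (f x), ← Measure.restrict_apply' measurableSet_Ioi]
        exact (lintegral_indicator_one (ENNReal.measurable_ofReal measurableSet_Iio)).symm
    _ = ∫⁻ r in Ioi (0 : ℝ), ∫⁻ x, S.indicator 1 (x, r) ∂μ :=
        lintegral_lintegral_swap (f := fun x r => S.indicator 1 (x, r))
          (measurable_one.indicator hS).aemeasurable
    _ = ∫⁻ r in Ioi (0 : ℝ), μ {x | ENNReal.ofReal r < f x} := lintegral_congr fun r =>
        lintegral_indicator_one (s := {x | ENNReal.ofReal r < f x}) (hf measurableSet_Ioi)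

def PrekopaLeindlerLIntegral {E : Type*} [AddCommGroup E] [Module ℝ E] [MeasurableSpace E]
    (μ : Measure E) (s t : ℝ) : Prop :=
  ∀ f g h : E → ℝ≥0∞, Measurable f → Measurable g → Measurable h →
    (∀ x y, f x ^ s * g y ^ t ≤ h (s • x + t • y)) →
    (∫⁻ x, f x ∂μ) ^ s * (∫⁻ x, g x ∂μ) ^ t ≤ ∫⁻ x, h x ∂μ

theorem smul_superlevel_add_smul_superlevel_subset {E : Type*} [AddCommGroup E] [Module ℝ E]
    {s t : ℝ} {f g h : E → ℝ≥0∞} (hs : 0 < s) (ht : 0 < t) (hst : s + t = 1)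
    (hfgh : ∀ x y, f x ^ s * g y ^ t ≤ h (s • x + t • y)) {a : ℝ≥0∞} (ha₀ : a ≠ 0)
    (ha : a ≠ ∞) : s • {x | a < f x} + t • {y | a < g y} ⊆ {z | a < h z} := by
  rintro _ ⟨_, ⟨x, hx, rfl⟩, _, ⟨y, hy, rfl⟩, rfl⟩
  calc a = a ^ s * a ^ t := by rw [← ENNReal.rpow_add _ _ ha₀ ha, hst, ENNReal.rpow_one]
    _ < f x ^ s * g y ^ t :=
        ENNReal.mul_lt_mul (ENNReal.rpow_lt_rpow hx hs) (ENNReal.rpow_lt_rpow hy ht)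
    _ ≤ h (s • x + t • y) := hfgh x y

namespace Real

variable {s t : ℝ} {f g h : ℝ → ℝ≥0∞}

theorem volume_superlevel_add_le (hs : 0 < s) (ht : 0 < t) (hst : s + t = 1) (hf : Measurable f)
    (hg : Measurable g) (hfgh : ∀ x y, f x ^ s * g y ^ t ≤ h (s • x + t • y))
    (hfg : ⨆ x, f x = ⨆ y, g y) {r : ℝ} (hr : 0 < r) :
    ENNReal.ofReal s * volume {x | ENNReal.ofReal r < f x}
        + ENNReal.ofReal t * volume {y | ENNReal.ofReal r < g y}
      ≤ volume {z | ENNReal.ofReal r < h z} := by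
  set A := {x | ENNReal.ofReal r < f x}
  set B := {y | ENNReal.ofReal r < g y}
  -- Both superlevel sets are nonempty exactly when `ofReal r` is below the common supremum.
  have hAB : A.Nonempty ↔ B.Nonempty := by
    change (∃ x, _ < f x) ↔ ∃ y, _ < g y
    rw [← lt_iSup_iff, ← lt_iSup_iff, hfg]
  by_cases hA : A.Nonempty
  · calc ENNReal.ofReal s * volume A + ENNReal.ofReal t * volume B
          = volume (s • A) + volume (t • B) := by
            simp [Measure.addHaar_smul, abs_of_pos hs, abs_of_pos ht]
      _ ≤ volume (s • A + t • B) :=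
          volume_add_volume_le ((hf measurableSet_Ioi).const_smul₀ s)
            ((hg measurableSet_Ioi).const_smul₀ t) hA.smul_set (hAB.1 hA).smul_set
      _ ≤ _ := measure_mono (smul_superlevel_add_smul_superlevel_subset hs ht hst hfgh
            (ENNReal.ofReal_pos.2 hr).ne' ENNReal.ofReal_ne_top)
  · rw [not_nonempty_iff_eq_empty.1 hA, not_nonempty_iff_eq_empty.1 (hAB.not.1 hA)]
    simp

theorem add_lintegral_le_of_iSup_eq (hs : 0 < s) (ht : 0 < t) (hst : s + t = 1)
    (hf : Measurable f) (hg : Measurable g) (hh : Measurable h)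
    (hfgh : ∀ x y, f x ^ s * g y ^ t ≤ h (s • x + t • y)) (hfg : ⨆ x, f x = ⨆ y, g y) :
    ENNReal.ofReal s * (∫⁻ x, f x) + ENNReal.ofReal t * ∫⁻ y, g y ≤ ∫⁻ z, h z := by
  have hmeas : ∀ u : ℝ → ℝ≥0∞, Measurable fun r : ℝ => volume {x | ENNReal.ofReal r < u x} :=
    fun u => Antitone.measurable fun r r' hrr' =>
      measure_mono fun x hx => (ENNReal.ofReal_le_ofReal hrr').trans_lt hx
  rw [lintegral_eq_lintegral_Ioi_measure_lt volume hf,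
    lintegral_eq_lintegral_Ioi_measure_lt volume hg,
    lintegral_eq_lintegral_Ioi_measure_lt volume hh, ← lintegral_const_mul _ (hmeas f),
    ← lintegral_const_mul _ (hmeas g), ← lintegral_add_left ((hmeas f).const_mul _)]
  exact setLIntegral_mono (hmeas h) fun r hr =>
    volume_superlevel_add_le hs ht hst hf hg hfgh hfg hr

theorem lintegral_rpow_mul_le_of_iSup_eq (hs : 0 < s) (ht : 0 < t) (hst : s + t = 1)
    (hf : Measurable f) (hg : Measurable g) (hh : Measurable h)
    (hfgh : ∀ x y, f x ^ s * g y ^ t ≤ h (s • x + t • y)) (hfg : ⨆ x, f x = ⨆ y, g y) :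
    (∫⁻ x, f x) ^ s * (∫⁻ y, g y) ^ t ≤ ∫⁻ z, h z :=
  ENNReal.rpow_mul_rpow_le_add hs ht hst |>.trans <|
    add_lintegral_le_of_iSup_eq hs ht hst hf hg hh hfgh hfg

theorem lintegral_rpow_mul_le_of_iSup_ne_top (hs : 0 < s) (ht : 0 < t) (hst : s + t = 1)
    (hf : Measurable f) (hg : Measurable g) (hh : Measurable h)
    (hfgh : ∀ x y, f x ^ s * g y ^ t ≤ h (s • x + t • y))
    (hF : ⨆ x, f x ≠ ∞) (hG : ⨆ y, g y ≠ ∞) :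
    (∫⁻ x, f x) ^ s * (∫⁻ y, g y) ^ t ≤ ∫⁻ z, h z := by
  set F := ⨆ x, f x
  set G := ⨆ y, g y
  rcases eq_or_ne F 0 with hF₀ | hF₀
  · have : f = 0 := funext <| ENNReal.iSup_eq_zero.1 hF₀
    simp [this, ENNReal.zero_rpow_of_pos hs]
  rcases eq_or_ne G 0 with hG₀ | hG₀
  · have : g = 0 := funext <| ENNReal.iSup_eq_zero.1 hG₀
    simp [this, ENNReal.zero_rpow_of_pos ht]
  -- Rescale `f` by `G` and `g` by `F` so that both have supremum `F * G`.
  have hscaled : ∀ x y, (G * f x) ^ s * (F * g y) ^ t ≤ G ^ s * F ^ t * h (s • x + t • y) := by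
    intro x y
    rw [ENNReal.mul_rpow_of_nonneg _ _ hs.le, ENNReal.mul_rpow_of_nonneg _ _ ht.le]
    calc G ^ s * f x ^ s * (F ^ t * g y ^ t) = G ^ s * F ^ t * (f x ^ s * g y ^ t) := by ring
      _ ≤ _ := by gcongr; exact hfgh x y
  have key := lintegral_rpow_mul_le_of_iSup_eq hs ht hst (hf.const_mul G) (hg.const_mul F)
    (hh.const_mul (G ^ s * F ^ t)) hscaled
    (by rw [← ENNReal.mul_iSup, ← ENNReal.mul_iSup, mul_comm])
  rw [lintegral_const_mul _ hf, lintegral_const_mul _ hg, lintegral_const_mul _ hh,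
    ENNReal.mul_rpow_of_nonneg _ _ hs.le, ENNReal.mul_rpow_of_nonneg _ _ ht.le] at key
  have hc₀ : G ^ s * F ^ t ≠ 0 := mul_ne_zero (ENNReal.rpow_pos (pos_iff_ne_zero.2 hG₀) hG).ne'
    (ENNReal.rpow_pos (pos_iff_ne_zero.2 hF₀) hF).ne'
  have hc : G ^ s * F ^ t ≠ ∞ := ENNReal.mul_ne_top (ENNReal.rpow_ne_top_of_nonneg hs.le hG)
    (ENNReal.rpow_ne_top_of_nonneg ht.le hF)
  refine (ENNReal.mul_le_mul_iff_right hc₀ hc).1 ?_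
  calc G ^ s * F ^ t * ((∫⁻ x, f x) ^ s * (∫⁻ y, g y) ^ t)
      = G ^ s * (∫⁻ x, f x) ^ s * (F ^ t * (∫⁻ y, g y) ^ t) := by ring
    _ ≤ _ := key

theorem prekopaLeindlerLIntegral_volume (hs : 0 ≤ s) (ht : 0 ≤ t) (hst : s + t = 1) :
    PrekopaLeindlerLIntegral (volume : Measure ℝ) s t := by
  intro f g h hf hg hh hfgh
  rcases hs.eq_or_lt with rfl | hs
  · obtain rfl : t = 1 := by linarith
    simpa using lintegral_mono fun y => by simpa using hfgh y y
  rcases ht.eq_or_lt with rfl | ht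
  · obtain rfl : s = 1 := by linarith
    simpa using lintegral_mono fun x => by simpa using hfgh x x
  -- Truncate `f` and `g` at height `n` and let `n → ∞` by monotone convergence.
  have htrunc : ∀ {u : ℝ → ℝ≥0∞}, Measurable u → ∫⁻ x, u x = ⨆ n : ℕ, ∫⁻ x, u x ⊓ n :=
    fun hu => by
      rw [← lintegral_iSup (fun n => hu.min measurable_const)
        fun m n hmn x => inf_le_inf_left _ (Nat.cast_le.2 hmn)]
      simp_rw [ENNReal.iSup_inf_natCast]
  have hmono : ∀ u : ℝ → ℝ≥0∞, Monotone fun n : ℕ => ∫⁻ x, u x ⊓ n :=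
    fun u m n hmn => lintegral_mono fun x => inf_le_inf_left _ (Nat.cast_le.2 hmn)
  have hbdd : ∀ (u : ℝ → ℝ≥0∞) (n : ℕ), ⨆ x, u x ⊓ n ≠ ∞ :=
    fun u n => ne_top_of_le_ne_top (ENNReal.natCast_ne_top n) (iSup_le fun x => inf_le_right)
  rw [htrunc hf, htrunc hg]
  refine ENNReal.rpow_iSup_mul_rpow_iSup_le hs ht (hmono f) (hmono g) fun n =>
    lintegral_rpow_mul_le_of_iSup_ne_top hs ht hst (hf.min measurable_const)
      (hg.min measurable_const) hh (fun x y => le_trans ?_ (hfgh x y)) (hbdd f n) (hbdd g n)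
  gcongr <;> exact inf_le_left

end Real

namespace PrekopaLeindlerLIntegral

variable {s t : ℝ}

theorem prod {α β : Type*} [MeasurableSpace α] [MeasurableSpace β] [AddCommGroup α] [Module ℝ α]
    [AddCommGroup β] [Module ℝ β] {μ : Measure α} {ν : Measure β} [SFinite μ] [SFinite ν]
    (hμ : PrekopaLeindlerLIntegral μ s t) (hν : PrekopaLeindlerLIntegral ν s t) :
    PrekopaLeindlerLIntegral (μ.prod ν) s t := by
  intro f g h hf hg hh hfgh
  have hfiber : ∀ x₁ y₁, (∫⁻ x₂, f (x₁, x₂) ∂ν) ^ s * (∫⁻ y₂, g (y₁, y₂) ∂ν) ^ t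
      ≤ ∫⁻ z₂, h (s • x₁ + t • y₁, z₂) ∂ν := fun x₁ y₁ =>
    hν _ _ _ (hf.comp measurable_prodMk_left) (hg.comp measurable_prodMk_left)
      (hh.comp measurable_prodMk_left) fun x₂ y₂ => hfgh (x₁, x₂) (y₁, y₂)
  rw [lintegral_prod _ hf.aemeasurable, lintegral_prod _ hg.aemeasurable,
    lintegral_prod _ hh.aemeasurable]
  exact hμ _ _ _ hf.lintegral_prod_right' hg.lintegral_prod_right' hh.lintegral_prod_right' hfiber

theorem of_measurePreserving {E F : Type*} [MeasurableSpace E] [MeasurableSpace F]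
    [AddCommGroup E] [Module ℝ E] [AddCommGroup F] [Module ℝ F] {μ : Measure E} {ν : Measure F}
    {e : E → F} (he : MeasurePreserving e μ ν)
    (hcomb : ∀ x y, e (s • x + t • y) = s • e x + t • e y)
    (hμ : PrekopaLeindlerLIntegral μ s t) : PrekopaLeindlerLIntegral ν s t := by
  intro f g h hf hg hh hfgh
  rw [← he.lintegral_comp hf, ← he.lintegral_comp hg, ← he.lintegral_comp hh]
  exact hμ _ _ _ (hf.comp he.measurable) (hg.comp he.measurable) (hh.comp he.measurable)
    fun x y => by simpa only [Function.comp, hcomb] using hfgh (e x) (e y)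

theorem volume_pi (hs : 0 ≤ s) (ht : 0 ≤ t) (hst : s + t = 1) :
    ∀ n : ℕ, PrekopaLeindlerLIntegral (volume : Measure (Fin n → ℝ)) s t
  | 0 => by
    intro f g h _ _ _ hfgh
    have hpt : (volume : Measure (Fin 0 → ℝ)) = Measure.dirac finZeroElim := by
      rw [MeasureTheory.volume_pi]
      exact Measure.pi_of_empty _ _
    simp only [hpt, lintegral_dirac]
    simpa only [Subsingleton.elim (s • finZeroElim + t • finZeroElim) finZeroElim] using
      hfgh finZeroElim finZeroElim
  | n + 1 => by
    let e := MeasurableEquiv.piFinSuccAbove (fun _ : Fin (n + 1) => ℝ) 0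
    have he : MeasurePreserving e volume (volume.prod volume) :=
      measurePreserving_piFinSuccAbove (fun _ : Fin (n + 1) => (volume : Measure ℝ)) 0
    refine of_measurePreserving he.symm (fun x y => e.injective ?_)
      ((Real.prekopaLeindlerLIntegral_volume hs ht hst).prod (volume_pi hs ht hst n))
    simp only [MeasurableEquiv.apply_symm_apply]
    rfl

theorem volume_euclideanSpace (hs : 0 ≤ s) (ht : 0 ≤ t) (hst : s + t = 1) (n : ℕ) :
    PrekopaLeindlerLIntegral (volume : Measure (EuclideanSpace ℝ (Fin n))) s t :=
  of_measurePreserving (EuclideanSpace.volume_preserving_symm_measurableEquiv_toLp (Fin n)).symm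
    (fun _ _ => rfl) (volume_pi hs ht hst n)

theorem withDensity {E : Type*} [MeasurableSpace E] [AddCommGroup E] [Module ℝ E]
    {μ : Measure E} (hμ : PrekopaLeindlerLIntegral μ s t) (hs : 0 ≤ s) (ht : 0 ≤ t)
    (hst : s + t = 1) {θ : E → ℝ} (hθ : Measurable θ) (hθ₀ : ∀ x, 0 ≤ θ x)
    (hθlc : IsLogConcave θ) :
    PrekopaLeindlerLIntegral (μ.withDensity fun x => ENNReal.ofReal (θ x)) s t := by
  intro f g h hf hg hh hfgh
  simp only [lintegral_withDensity_eq_lintegral_mul _ hθ.ennreal_ofReal, hf, hg, hh]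
  refine hμ _ _ _ (hθ.ennreal_ofReal.mul hf) (hθ.ennreal_ofReal.mul hg)
    (hθ.ennreal_ofReal.mul hh) fun x y => ?_
  have hθxy : ENNReal.ofReal (θ x) ^ s * ENNReal.ofReal (θ y) ^ t
      ≤ ENNReal.ofReal (θ (s • x + t • y)) := by
    rw [ENNReal.ofReal_rpow_mul_ofReal_rpow (hθ₀ x) (hθ₀ y) hs ht]
    exact ENNReal.ofReal_le_ofReal (hθlc x y s t hs ht hst)
  simp only [Pi.mul_apply, ENNReal.mul_rpow_of_nonneg _ _ hs, ENNReal.mul_rpow_of_nonneg _ _ ht]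
  calc _ = (ENNReal.ofReal (θ x) ^ s * ENNReal.ofReal (θ y) ^ t) * (f x ^ s * g y ^ t) := by
        ring
    _ ≤ _ := mul_le_mul' hθxy (hfgh x y)

end PrekopaLeindlerLIntegral

theorem indicator_interior_setOf_pos_ae_eq {X : Type*} [TopologicalSpace X] [MeasurableSpace X]
    {μ : Measure X} {f : X → ℝ} (hf₀ : ∀ x, 0 ≤ f x)
    (hfront : μ (frontier {x | 0 < f x}) = 0) :
    (interior {x | 0 < f x}).indicator f =ᵐ[μ] f := by
  refine measure_mono_null (fun x hx => ?_) hfront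
  change (interior {x | 0 < f x}).indicator f x ≠ f x at hx
  by_cases hxU : x ∈ interior {x | 0 < f x}
  · exact absurd (Set.indicator_of_mem hxU f) hx
  · rw [Set.indicator_of_notMem hxU] at hx
    exact ⟨subset_closure (lt_of_le_of_ne (hf₀ x) hx), hxU⟩

namespace IsLogConcave

variable {E : Type*} [AddCommGroup E] [Module ℝ E] {f : E → ℝ}

theorem convex_pos (hf : IsLogConcave f) : Convex ℝ {x | 0 < f x} :=
  fun x hx y hy p q hp hq hpq =>
    (mul_pos (Real.rpow_pos_of_pos hx p) (Real.rpow_pos_of_pos hy q)).trans_le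
      (hf x y p q hp hq hpq)

theorem concaveOn_log (hf : IsLogConcave f) :
    ConcaveOn ℝ {x | 0 < f x} fun x => Real.log (f x) := by
  refine ⟨hf.convex_pos, fun x (hx : 0 < f x) y (hy : 0 < f y) p q hp hq hpq => ?_⟩
  have hxy := mul_pos (Real.rpow_pos_of_pos hx p) (Real.rpow_pos_of_pos hy q)
  calc p • Real.log (f x) + q • Real.log (f y) = Real.log (f x ^ p * f y ^ q) := by
        rw [Real.log_mul (Real.rpow_pos_of_pos hx p).ne' (Real.rpow_pos_of_pos hy q).ne',
          Real.log_rpow hx, Real.log_rpow hy, smul_eq_mul, smul_eq_mul]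
    _ ≤ Real.log (f (p • x + q • y)) := Real.log_le_log hxy (hf x y p q hp hq hpq)

theorem indicator (hf : IsLogConcave f) (hf₀ : ∀ x, 0 ≤ f x) {U : Set E} (hU : Convex ℝ U) :
    IsLogConcave (U.indicator f) := by
  intro x y p q hp hq hpq
  rcases hp.eq_or_lt with rfl | hp
  · obtain rfl : q = 1 := by linarith
    simp
  rcases hq.eq_or_lt with rfl | hq
  · obtain rfl : p = 1 := by linarith
    simp
  by_cases hxy : x ∈ U ∧ y ∈ U
  · simp only [Set.indicator_of_mem hxy.1, Set.indicator_of_mem hxy.2,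
      Set.indicator_of_mem (hU hxy.1 hxy.2 hp.le hq.le hpq)]
    exact hf x y p q hp.le hq.le hpq
  · refine le_of_eq_of_le ?_ (Set.indicator_nonneg (fun z _ => hf₀ z) _)
    rcases not_and_or.1 hxy with hx | hy
    · simp [Set.indicator_of_notMem hx, Real.zero_rpow hp.ne']
    · simp [Set.indicator_of_notMem hy, Real.zero_rpow hq.ne']

theorem exists_measurable_ae_eq {F : Type*} [NormedAddCommGroup F] [NormedSpace ℝ F]
    [FiniteDimensional ℝ F] [MeasurableSpace F] [BorelSpace F] {μ : Measure F}
    [μ.IsAddHaarMeasure] {θ : F → ℝ} (hθ : IsLogConcave θ) (hθ₀ : ∀ x, 0 ≤ θ x) :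
    ∃ θ' : F → ℝ, Measurable θ' ∧ (∀ x, 0 ≤ θ' x) ∧ IsLogConcave θ' ∧ θ' =ᵐ[μ] θ := by
  classical
  have hcont : ContinuousOn θ (interior {x | 0 < θ x}) :=
    (Real.continuous_exp.comp_continuousOn hθ.concaveOn_log.continuousOn_interior).congr
      fun x hx => (Real.exp_log (interior_subset (s := {x | 0 < θ x}) hx)).symm
  refine ⟨(interior {x | 0 < θ x}).indicator θ, ?_, Set.indicator_nonneg (fun x _ => hθ₀ x),
    hθ.indicator hθ₀ hθ.convex_pos.interior,
    indicator_interior_setOf_pos_ae_eq hθ₀ (hθ.convex_pos.addHaar_frontier μ)⟩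
  exact hcont.measurable_piecewise continuousOn_const isOpen_interior.measurableSet

end IsLogConcave

theorem isFiniteMeasureOnCompacts_withDensity_ofReal {X : Type*} [TopologicalSpace X]
    [MeasurableSpace X] {μ : Measure X} [SFinite μ] {θ : X → ℝ} (hθ : LocallyIntegrable θ μ) :
    IsFiniteMeasureOnCompacts (μ.withDensity fun x => ENNReal.ofReal (θ x)) where
  lt_top_of_isCompact K hK := by
    rw [withDensity_apply']
    exact (lintegral_mono fun x => Real.ofReal_le_enorm (θ x)).trans_lt
      (hθ.integrableOn_isCompact hK).2

theorem PrekopaLeindlerLIntegral.prekopaLeindler {E : Type*} [AddCommGroup E] [Module ℝ E]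
    [TopologicalSpace E] [MeasurableSpace E] [OpensMeasurableSpace E] {ρ : Measure E}
    [IsFiniteMeasureOnCompacts ρ]
    (hρ : ∀ s t : ℝ, 0 ≤ s → 0 ≤ t → s + t = 1 → PrekopaLeindlerLIntegral ρ s t) :
    PrekopaLeindler ρ := by
  intro s t hs ht hst a b c ha hb hc hsa hsb hsc ha₀ hb₀ hc₀ habc
  have hlint : ∀ {u : E → ℝ}, Continuous u → (∀ x, 0 ≤ u x) →
      ∫ x, u x ∂ρ = (∫⁻ x, ENNReal.ofReal (u x) ∂ρ).toReal :=
    fun hu hu₀ => integral_eq_lintegral_of_nonneg_ae (.of_forall hu₀) hu.aestronglyMeasurable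
  rw [hlint ha ha₀, hlint hb hb₀, hlint hc hc₀, ENNReal.toReal_rpow,
    ENNReal.toReal_rpow, ← ENNReal.toReal_mul]
  refine ENNReal.toReal_mono (ha.integrable_of_hasCompactSupport hsa).lintegral_lt_top.ne <|
    hρ s t hs ht hst _ _ _ hb.measurable.ennreal_ofReal hc.measurable.ennreal_ofReal
      ha.measurable.ennreal_ofReal fun x y => ?_
  rw [ENNReal.ofReal_rpow_mul_ofReal_rpow (hb₀ x) (hc₀ y) hs ht]
  exact ENNReal.ofReal_le_ofReal (habc x y)

/-- If `θ` is a nonnegative, log-concave, locally Lebesgue-integrable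
function on `ℝ^d`, then the measure `dρ = θ dx` satisfies the Prékopa–Leindler property. -/
theorem logConcave_density_prekopaLeindler {d : ℕ}
    (θ : EuclideanSpace ℝ (Fin d) → ℝ)
    (hθ0 : ∀ x, 0 ≤ θ x) (hθlc : IsLogConcave θ)
    (hθint : LocallyIntegrable θ volume) :
    PrekopaLeindler (volume.withDensity fun x => ENNReal.ofReal (θ x)) := by
  have := isFiniteMeasureOnCompacts_withDensity_ofReal hθint
  obtain ⟨θ', hθ'm, hθ'₀, hθ'lc, hθ'θ⟩ := hθlc.exists_measurable_ae_eq (μ := volume) hθ0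
  have hρ : volume.withDensity (fun x => ENNReal.ofReal (θ x))
      = volume.withDensity fun x => ENNReal.ofReal (θ' x) :=
    withDensity_congr_ae (hθ'θ.symm.fun_comp ENNReal.ofReal)
  refine PrekopaLeindlerLIntegral.prekopaLeindler fun s t hs ht hst => ?_
  rw [hρ]
  exact (PrekopaLeindlerLIntegral.volume_euclideanSpace hs ht hst d).withDensity hs ht hst
    hθ'm hθ'₀ hθ'lc
end
end

section
/- Let ρ₁ be a finite Borel measure on ℝ^n and ρ₂ a finite Borel measure on ℝ^m, each satisfying the Prékopa–Leindler property on its respective space. Then the product measure ρ₁ ⊗ ρ₂ satisfies the Prékopa–Leindler property on ℝ^n × ℝ^m. -/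
open MeasureTheory Pointwise ENNReal

noncomputable section

/-! Integrate out the second variable: by the property of `ν`, the fiber integrals
`x ↦ ∫ y, f (x, y) ∂ν` of `a`, `b`, `c` satisfy the hypothesis of the property of `μ`, and Fubini
identifies their `μ`-integrals with the integrals over `μ.prod ν`. -/

section FiberIntegral

variable {E F : Type*} [TopologicalSpace E] [TopologicalSpace F] {f : E × F → ℝ}

lemma HasCompactSupport.comp_prodMk_right (hf : HasCompactSupport f) (x : E) :
    HasCompactSupport fun y => f (x, y) := by
  have hsub : tsupport (fun y => f (x, y)) ⊆ Prod.mk x ⁻¹' tsupport f :=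
    closure_minimal (fun y hy => subset_tsupport f hy)
      ((isClosed_tsupport f).preimage (.prodMk_right x))
  exact (hf.image continuous_snd).of_isClosed_subset (isClosed_tsupport _)
    fun y hy => ⟨(x, y), hsub hy, rfl⟩

variable [MeasurableSpace F] (ν : Measure F)

lemma HasCompactSupport.integral_prodMk_right [R1Space E] (hf : HasCompactSupport f) :
    HasCompactSupport fun x => ∫ y, f (x, y) ∂ν := by
  refine HasCompactSupport.intro (hf.image continuous_fst) fun x hx => ?_
  have hslice : ∀ y, f (x, y) = 0 := fun y => by
    by_contra h
    exact hx ⟨(x, y), subset_tsupport f h, rfl⟩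
  simp [hslice]

lemma Continuous.integral_prodMk_right [FirstCountableTopology E] [OpensMeasurableSpace F]
    [IsFiniteMeasure ν] (hf : Continuous f) (hcf : HasCompactSupport f) :
    Continuous fun x => ∫ y, f (x, y) ∂ν := by
  obtain ⟨C, hC⟩ := hcf.exists_bound_of_continuous hf
  refine continuous_of_dominated (bound := fun _ => C)
    (fun x => (hf.comp (.prodMk_right x)).aestronglyMeasurable)
    (fun x => .of_forall fun y => hC (x, y)) (integrable_const C)
    (.of_forall fun y => hf.comp (.prodMk_left y))

end FiberIntegral

theorem PrekopaLeindler.prod {E F : Type*} [AddCommGroup E] [Module ℝ E] [TopologicalSpace E]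
    [MeasurableSpace E] [OpensMeasurableSpace E] [FirstCountableTopology E] [R1Space E]
    [AddCommGroup F] [Module ℝ F] [TopologicalSpace F] [MeasurableSpace F]
    [OpensMeasurableSpace F] [SecondCountableTopologyEither E F]
    {μ : Measure E} {ν : Measure F} [IsFiniteMeasure μ] [IsFiniteMeasure ν]
    (hμ : PrekopaLeindler μ) (hν : PrekopaLeindler ν) : PrekopaLeindler (μ.prod ν) := by
  intro s t hs ht hst a b c ha hb hc hca hcb hcc ha0 hb0 hc0 hab
  have hfiber : ∀ x x', (∫ y, b (x, y) ∂ν) ^ s * (∫ y, c (x', y) ∂ν) ^ t ≤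
      ∫ y, a (s • x + t • x', y) ∂ν := fun x x' =>
    hν s t hs ht hst _ _ _
      (ha.comp (.prodMk_right _)) (hb.comp (.prodMk_right _)) (hc.comp (.prodMk_right _))
      (hca.comp_prodMk_right _) (hcb.comp_prodMk_right _) (hcc.comp_prodMk_right _)
      (fun _ => ha0 _) (fun _ => hb0 _) (fun _ => hc0 _) fun y y' => hab (x, y) (x', y')
  rw [integral_prod a (ha.integrable_of_hasCompactSupport hca),
    integral_prod b (hb.integrable_of_hasCompactSupport hcb),
    integral_prod c (hc.integrable_of_hasCompactSupport hcc)]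
  exact hμ s t hs ht hst _ _ _
    (ha.integral_prodMk_right ν hca) (hb.integral_prodMk_right ν hcb)
    (hc.integral_prodMk_right ν hcc)
    (hca.integral_prodMk_right ν) (hcb.integral_prodMk_right ν) (hcc.integral_prodMk_right ν)
    (fun x => integral_nonneg fun y => ha0 (x, y)) (fun x => integral_nonneg fun y => hb0 (x, y))
    (fun x => integral_nonneg fun y => hc0 (x, y)) hfiber

/-- The product of two finite measures satisfying the
Prékopa–Leindler property also satisfies the Prékopa–Leindler property. -/
theorem prekopaLeindler_prod {n m : ℕ}
    (ρ₁ : Measure (EuclideanSpace ℝ (Fin n))) (ρ₂ : Measure (EuclideanSpace ℝ (Fin m)))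
    [IsFiniteMeasure ρ₁] [IsFiniteMeasure ρ₂]
    (h₁ : PrekopaLeindler ρ₁) (h₂ : PrekopaLeindler ρ₂) :
    PrekopaLeindler (ρ₁.prod ρ₂) :=
  h₁.prod h₂
end
end

section
/- Let ρ be a Borel measure on ℝ^d with a continuous nonnegative density F with respect to Lebesgue measure. If ρ satisfies the Prékopa–Leindler property, then F is log-concave: F(s·x + t·y) ≥ F(x)^s · F(y)^t for all x, y ∈ ℝ^d and s, t ≥ 0 with s + t = 1. -/
open MeasureTheory Pointwise ENNReal

noncomputable section

/-! Test the Prékopa–Leindler property on the rescaled translates `u ↦ φ (r⁻¹ • (u - p))`,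
`p ∈ {x, y, s • x + t • y}`, of the log-concave tent `φ w = max 0 (1 - ‖w‖)`: log-concavity of
`φ` is exactly the pointwise hypothesis. Substituting `u = p + r • w`, the three integrals become
`r ^ d` times the averages `∫ φ w * F (p + r • w)`, the factor `r ^ d` cancels, and letting
`r → 0` the averages tend to `F p * ∫ φ`. -/

open Module Set Filter Topology

theorem mul_rpow_mul_mul_rpow {c a b s t : ℝ} (hc : 0 ≤ c) (ha : 0 ≤ a) (hb : 0 ≤ b)
    (hst : s + t = 1) : (c * a) ^ s * (c * b) ^ t = c * (a ^ s * b ^ t) := by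
  rw [Real.mul_rpow hc ha, Real.mul_rpow hc hb, mul_mul_mul_comm,
    ← Real.rpow_add' hc (by simp [hst]), hst, Real.rpow_one]

section LogConcave

variable {E : Type*} [AddCommGroup E] [Module ℝ E]

theorem ConcaveOn.isLogConcave_max_zero {g : E → ℝ} (hg : ConcaveOn ℝ univ g) :
    IsLogConcave fun u => max 0 (g u) := by
  intro u v s t hs ht hst
  rcases hs.eq_or_lt with rfl | hs
  · simp [show t = 1 by linarith]
  rcases ht.eq_or_lt with rfl | ht
  · simp [show s = 1 by linarith]
  rcases le_or_gt (g u) 0 with hu | hu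
  · simp [max_eq_left hu, Real.zero_rpow hs.ne']
  rcases le_or_gt (g v) 0 with hv | hv
  · simp [max_eq_left hv, Real.zero_rpow ht.ne']
  dsimp only
  rw [max_eq_right hu.le, max_eq_right hv.le]
  calc g u ^ s * g v ^ t ≤ s * g u + t * g v :=
        Real.geom_mean_le_arith_mean2_weighted hs.le ht.le hu.le hv.le hst
    _ ≤ g (s • u + t • v) := hg.2 (mem_univ _) (mem_univ _) hs.le ht.le hst
    _ ≤ max 0 (g (s • u + t • v)) := le_max_right _ _

theorem IsLogConcave.rpow_mul_rpow_le_smul_sub {φ : E → ℝ} (hφ : IsLogConcave φ) (c : ℝ)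
    {s t : ℝ} (hs : 0 ≤ s) (ht : 0 ≤ t) (hst : s + t = 1) (x y u v : E) :
    φ (c • (u - x)) ^ s * φ (c • (v - y)) ^ t ≤ φ (c • (s • u + t • v - (s • x + t • y))) := by
  convert hφ (c • (u - x)) (c • (v - y)) s t hs ht hst using 2
  module

end LogConcave

theorem isLogConcave_max_zero_one_sub_norm {E : Type*} [NormedAddCommGroup E]
    [NormedSpace ℝ E] :
    IsLogConcave fun w : E => max 0 (1 - ‖w‖) :=
  ((concaveOn_const 1 convex_univ).sub (convexOn_norm convex_univ)).isLogConcave_max_zero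

theorem hasCompactSupport_max_zero_one_sub_norm {E : Type*} [NormedAddCommGroup E]
    [ProperSpace E] :
    HasCompactSupport fun w : E => max 0 (1 - ‖w‖) :=
  HasCompactSupport.intro (isCompact_closedBall 0 1) fun w hw => by
    simp only [Metric.mem_closedBall, dist_zero_right, not_le] at hw
    simp [hw.le]

theorem HasCompactSupport.comp_smul_sub {E : Type*} [NormedAddCommGroup E] [NormedSpace ℝ E]
    {φ : E → ℝ} (hφ : HasCompactSupport φ) {r : ℝ} (hr : r ≠ 0) (p : E) :
    HasCompactSupport fun u => φ (r⁻¹ • (u - p)) :=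
  hφ.comp_homeomorph
    ((Homeomorph.subRight p).trans (Homeomorph.smulOfNeZero r⁻¹ (inv_ne_zero hr)))

theorem integral_withDensity_comp_smul_sub {E : Type*} [NormedAddCommGroup E] [NormedSpace ℝ E]
    [MeasurableSpace E] [BorelSpace E] [FiniteDimensional ℝ E] (μ : Measure E)
    [μ.IsAddHaarMeasure] {F : E → ℝ} (hF : Measurable F) (hF0 : ∀ x, 0 ≤ F x)
    (φ : E → ℝ) (p : E) {r : ℝ} (hr : 0 < r) :
    ∫ u, φ (r⁻¹ • (u - p)) ∂μ.withDensity (fun u => ENNReal.ofReal (F u)) =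
      r ^ finrank ℝ E * ∫ w, φ w * F (p + r • w) ∂μ := by
  rw [integral_withDensity_eq_integral_toReal_smul hF.ennreal_ofReal
    (ae_of_all _ fun _ => ENNReal.ofReal_lt_top)]
  simp_rw [ENNReal.toReal_ofReal (hF0 _), smul_eq_mul]
  calc ∫ u, F u * φ (r⁻¹ • (u - p)) ∂μ = ∫ w, φ (r⁻¹ • w) * F (p + r • r⁻¹ • w) ∂μ := by
        rw [← integral_add_right_eq_self _ p]
        simp [smul_inv_smul₀ hr.ne', mul_comm, add_comm]
    _ = r ^ finrank ℝ E * ∫ w, φ w * F (p + r • w) ∂μ :=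
        Measure.integral_comp_inv_smul_of_nonneg μ (fun w => φ w * F (p + r • w)) hr.le

theorem tendsto_integral_mul_comp_add_smul {E : Type*} [NormedAddCommGroup E] [NormedSpace ℝ E]
    [MeasurableSpace E] [OpensMeasurableSpace E] (μ : Measure E) [IsLocallyFiniteMeasure μ]
    {φ F : E → ℝ} (hφ : Continuous φ) (hφc : HasCompactSupport φ) (hF : Continuous F) (p : E) :
    Tendsto (fun r : ℝ => ∫ w, φ w * F (p + r • w) ∂μ) (𝓝 0) (𝓝 ((∫ w, φ w ∂μ) * F p)) := by
  have hcont : Continuous fun r : ℝ => ∫ w in tsupport φ, φ w * F (p + r • w) ∂μ :=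
    continuous_parametric_integral_of_continuous (by fun_prop) hφc
  have hsupp (r : ℝ) : ∫ w in tsupport φ, φ w * F (p + r • w) ∂μ = ∫ w, φ w * F (p + r • w) ∂μ :=
    setIntegral_eq_integral_of_forall_compl_eq_zero fun w hw => by
      rw [image_eq_zero_of_notMem_tsupport hw, zero_mul]
  simp only [hsupp] at hcont
  simpa [integral_mul_const] using hcont.tendsto 0

theorem PrekopaLeindler.integral_mul_comp_add_smul_le {E : Type*} [NormedAddCommGroup E]
    [NormedSpace ℝ E] [MeasurableSpace E] [BorelSpace E] [FiniteDimensional ℝ E]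
    {μ : Measure E} [μ.IsAddHaarMeasure] {F : E → ℝ} (hF : Measurable F) (hF0 : ∀ x, 0 ≤ F x)
    (h : PrekopaLeindler (μ.withDensity fun x => ENNReal.ofReal (F x)))
    {φ : E → ℝ} (hφ : Continuous φ) (hφc : HasCompactSupport φ) (hφ0 : ∀ w, 0 ≤ φ w)
    (hφlc : IsLogConcave φ) {s t : ℝ} (hs : 0 ≤ s) (ht : 0 ≤ t) (hst : s + t = 1) (x y : E)
    {r : ℝ} (hr : 0 < r) :
    (∫ w, φ w * F (x + r • w) ∂μ) ^ s * (∫ w, φ w * F (y + r • w) ∂μ) ^ t ≤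
      ∫ w, φ w * F (s • x + t • y + r • w) ∂μ := by
  have hPL := h s t hs ht hst (fun u => φ (r⁻¹ • (u - (s • x + t • y))))
    (fun u => φ (r⁻¹ • (u - x))) (fun u => φ (r⁻¹ • (u - y))) (by fun_prop) (by fun_prop)
    (by fun_prop) (hφc.comp_smul_sub hr.ne' _) (hφc.comp_smul_sub hr.ne' _)
    (hφc.comp_smul_sub hr.ne' _) (fun _ => hφ0 _) (fun _ => hφ0 _) (fun _ => hφ0 _)
    (hφlc.rpow_mul_rpow_le_smul_sub r⁻¹ hs ht hst x y)
  have hint_nonneg (p : E) : 0 ≤ ∫ w, φ w * F (p + r • w) ∂μ :=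
    integral_nonneg fun w => mul_nonneg (hφ0 w) (hF0 _)
  simp only [integral_withDensity_comp_smul_sub μ hF hF0 φ _ hr] at hPL
  rw [mul_rpow_mul_mul_rpow (by positivity) (hint_nonneg x) (hint_nonneg y) hst] at hPL
  exact le_of_mul_le_mul_left hPL (by positivity)

/-- If a measure with continuous nonnegative density `F` (w.r.t.
Lebesgue measure) satisfies the Prékopa–Leindler property, then `F` is log-concave. -/
theorem isLogConcave_of_prekopaLeindler {d : ℕ}
    (F : EuclideanSpace ℝ (Fin d) → ℝ) (hFc : Continuous F) (hF0 : ∀ x, 0 ≤ F x)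
    (h : PrekopaLeindler (volume.withDensity fun x => ENNReal.ofReal (F x))) :
    IsLogConcave F := by
  intro x y s t hs ht hst
  set φ : EuclideanSpace ℝ (Fin d) → ℝ := fun w => max 0 (1 - ‖w‖)
  have hφ : Continuous φ := by fun_prop
  have hφc : HasCompactSupport φ := hasCompactSupport_max_zero_one_sub_norm
  have hlim (p) := (tendsto_integral_mul_comp_add_smul volume hφ hφc hFc p).mono_left
    (nhdsWithin_le_nhds (s := Ioi 0))
  have hK : 0 < ∫ w, φ w := hφ.integral_pos_of_hasCompactSupport_nonneg_nonzero hφc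
    (fun w => le_max_left _ _) (x := 0) (by simp [φ])
  have hlimit := le_of_tendsto_of_tendsto
    (((hlim x).rpow_const (Or.inr hs)).mul ((hlim y).rpow_const (Or.inr ht)))
    (hlim (s • x + t • y))
    (eventually_nhdsWithin_of_forall fun r (hr : 0 < r) =>
      h.integral_mul_comp_add_smul_le hFc.measurable hF0 hφ hφc (fun _ => le_max_left _ _)
        isLogConcave_max_zero_one_sub_norm hs ht hst x y hr)
  rwa [mul_rpow_mul_mul_rpow hK.le (hF0 x) (hF0 y) hst, mul_le_mul_iff_right₀ hK] at hlimit
end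
end

section
/- Let ρ be a finite Borel measure on ℝ^d satisfying the Prékopa–Leindler property. Then the Prékopa–Leindler inequality also holds for Borel test functions: for all s, t ≥ 0 with s + t = 1 and all nonnegative Borel measurable functions a, b, c on ℝ^d such that a(s·x + t·y) ≥ b(x)^s · c(y)^t for all x, y ∈ ℝ^d, one has ∫ a dρ ≥ (∫ b dρ)^s · (∫ c dρ)^t. -/
/-!
Testing the Prékopa–Leindler property on tent functions `max (1 - d(·, K) / δ) 0` and letting
`δ → 0` gives the multiplicative Brunn–Minkowski inequality `ρ K ^ s * ρ L ^ t ≤ ρ (s • K + t • L)`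
for compact sets, hence, by inner regularity, for the level sets `{b > u}`, `{c > v}` and
`{a > u ^ s * v ^ t}`. By the layer cake formula and the substitution `u = exp x`, the three
integrals become Lebesgue integrals over `ℝ` of functions satisfying the one-dimensional
Prékopa–Leindler hypothesis. The one-dimensional inequality follows, after normalising the
suprema to `1`, by integrating the Brunn–Minkowski inequality `|A| + |B| ≤ |A + B|` for the
level sets and applying weighted AM-GM.
-/

open MeasureTheory Pointwise ENNReal

noncomputable section

open Set
open scoped NNReal

theorem ENNReal.geom_mean_le_arith_mean2_weighted {w₁ w₂ : ℝ} (hw₁ : 0 < w₁) (hw₂ : 0 < w₂)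
    (hw : w₁ + w₂ = 1) (p₁ p₂ : ℝ≥0∞) :
    p₁ ^ w₁ * p₂ ^ w₂ ≤ ENNReal.ofReal w₁ * p₁ + ENNReal.ofReal w₂ * p₂ := by
  rcases eq_or_ne p₁ ∞ with rfl | hp₁
  · simp [ENNReal.mul_top, hw₁]
  rcases eq_or_ne p₂ ∞ with rfl | hp₂
  · simp [ENNReal.mul_top, hw₂]
  lift p₁ to ℝ≥0 using hp₁
  lift p₂ to ℝ≥0 using hp₂
  have key := NNReal.geom_mean_le_arith_mean2_weighted w₁.toNNReal w₂.toNNReal p₁ p₂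
    (by rw [← Real.toNNReal_add hw₁.le hw₂.le, hw, Real.toNNReal_one])
  rw [Real.coe_toNNReal _ hw₁.le, Real.coe_toNNReal _ hw₂.le] at key
  rw [ENNReal.ofReal, ENNReal.ofReal, ← coe_rpow_of_nonneg _ hw₁.le,
    ← coe_rpow_of_nonneg _ hw₂.le]
  exact_mod_cast key

theorem lintegral_eq_lintegral_meas_ofReal_lt {α : Type*} [MeasurableSpace α] (μ : Measure α)
    [SFinite μ] {f : α → ℝ≥0∞} (hf : Measurable f) :
    ∫⁻ ω, f ω ∂μ = ∫⁻ t in Ioi 0, μ {ω | ENNReal.ofReal t < f ω} := by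
  have hS : MeasurableSet {p : α × ℝ | ENNReal.ofReal p.2 < f p.1} :=
    measurableSet_lt (ENNReal.measurable_ofReal.comp measurable_snd) (hf.comp measurable_fst)
  have hvol (z : ℝ≥0∞) : volume.restrict (Ioi 0) {t : ℝ | ENNReal.ofReal t < z} = z := by
    rw [Measure.restrict_apply' measurableSet_Ioi]
    rcases eq_or_ne z ∞ with rfl | hz
    · simp
    · have : {t : ℝ | ENNReal.ofReal t < z} ∩ Ioi 0 = Ioo 0 z.toReal := by
        ext t
        simp only [mem_inter_iff, mem_ofPred_eq, mem_Ioi, mem_Ioo]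
        constructor
        · rintro ⟨h, ht⟩; exact ⟨ht, (ENNReal.ofReal_lt_iff_lt_toReal ht.le hz).1 h⟩
        · rintro ⟨ht, h⟩; exact ⟨(ENNReal.ofReal_lt_iff_lt_toReal ht.le hz).2 h, ht⟩
      rw [this, Real.volume_Ioo, sub_zero, ofReal_toReal hz]
  calc ∫⁻ ω, f ω ∂μ = ∫⁻ ω, volume.restrict (Ioi 0) (Prod.mk ω ⁻¹' _) ∂μ :=
        lintegral_congr fun ω => (hvol (f ω)).symm
    _ = ∫⁻ t in Ioi 0, μ {ω | ENNReal.ofReal t < f ω} :=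
        (Measure.prod_apply hS).symm.trans (Measure.prod_apply_symm hS)

theorem lintegral_Ioi_zero_eq_lintegral_exp_mul (g : ℝ → ℝ≥0∞) :
    ∫⁻ u in Ioi 0, g u = ∫⁻ x, ENNReal.ofReal (Real.exp x) * g (Real.exp x) := by
  have := lintegral_image_eq_lintegral_abs_deriv_mul MeasurableSet.univ
    (fun x _ => (Real.hasDerivAt_exp x).hasDerivWithinAt) Real.exp_injective.injOn g
  simpa [Real.range_exp, abs_of_pos (Real.exp_pos _)] using this

theorem smul_add_smul_subset_setOf_ofReal_lt {E : Type*} [AddCommGroup E] [Module ℝ E]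
    {s t : ℝ} (hs : 0 < s) (ht : 0 < t) {a b c : E → ℝ≥0∞}
    (h : ∀ x y, b x ^ s * c y ^ t ≤ a (s • x + t • y)) {u v : ℝ} (hu : 0 ≤ u) (hv : 0 ≤ v) :
    s • {x | ENNReal.ofReal u < b x} + t • {y | ENNReal.ofReal v < c y} ⊆
      {z | ENNReal.ofReal (u ^ s * v ^ t) < a z} := by
  rintro _ ⟨_, ⟨x, hx, rfl⟩, _, ⟨y, hy, rfl⟩, rfl⟩
  refine lt_of_lt_of_le ?_ (h x y)
  rw [ENNReal.ofReal_mul (Real.rpow_nonneg hu s), ← ofReal_rpow_of_nonneg hu hs.le,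
    ← ofReal_rpow_of_nonneg hv ht.le]
  exact ENNReal.mul_lt_mul (rpow_lt_rpow hx hs) (rpow_lt_rpow hy ht)

theorem Real.volume_add_volume_le_volume_add_of_isCompact {K L : Set ℝ} (hK : IsCompact K)
    (hL : IsCompact L) (hK₀ : K.Nonempty) (hL₀ : L.Nonempty) :
    volume K + volume L ≤ volume (K + L) := by
  set x := sSup K
  set y := sInf L
  have hx : x ∈ K := hK.sSup_mem hK₀
  have hy : y ∈ L := hL.sInf_mem hL₀
  -- `y + K` lies left of `x + y` and `x + L` right of it, and both lie in `K + L`.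
  have hleft : (y +ᵥ K) \ {x + y} ⊆ Iio (x + y) := by
    rintro _ ⟨⟨k, hk, rfl⟩, hne⟩
    have : k ≠ x := fun h => hne (by simp [h, add_comm])
    simpa [vadd_eq_add, add_comm y] using (le_csSup hK.bddAbove hk).lt_of_ne this
  have hright : x +ᵥ L ⊆ Ici (x + y) := by
    rintro _ ⟨l, hl, rfl⟩
    simpa [vadd_eq_add] using csInf_le hL.bddBelow hl
  have hsub : (y +ᵥ K) \ {x + y} ∪ (x +ᵥ L) ⊆ K + L := by
    rintro _ (⟨⟨k, hk, rfl⟩, -⟩ | ⟨l, hl, rfl⟩)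
    · exact ⟨k, hk, y, hy, by simp [vadd_eq_add, add_comm]⟩
    · exact ⟨x, hx, l, hl, rfl⟩
  calc volume K + volume L = volume ((y +ᵥ K) \ {x + y}) + volume (x +ᵥ L) := by
        rw [measure_sdiff_null (measure_singleton _), measure_vadd, measure_vadd]
    _ = volume ((y +ᵥ K) \ {x + y} ∪ (x +ᵥ L)) :=
        (measure_union ((Iio_disjoint_Ici le_rfl).mono hleft hright)
          (hL.vadd x).measurableSet).symm
    _ ≤ volume (K + L) := measure_mono hsub

theorem Real.volume_add_volume_le_volume_add {A B : Set ℝ} (hA : MeasurableSet A)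
    (hB : MeasurableSet B) (hA₀ : A.Nonempty) (hB₀ : B.Nonempty) :
    volume A + volume B ≤ volume (A + B) := by
  obtain ⟨x, hx⟩ := hA₀
  obtain ⟨y, hy⟩ := hB₀
  rw [hA.measure_eq_iSup_isCompact, hB.measure_eq_iSup_isCompact]
  simp only [iSup_and']
  refine ENNReal.biSup_add_biSup_le' ⟨∅, empty_subset _, isCompact_empty⟩
    ⟨∅, empty_subset _, isCompact_empty⟩ fun K ⟨hKA, hK⟩ L ⟨hLB, hL⟩ => ?_
  calc volume K + volume L ≤ volume (insert x K) + volume (insert y L) :=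
        add_le_add (measure_mono (subset_insert _ _)) (measure_mono (subset_insert _ _))
    _ ≤ volume (insert x K + insert y L) :=
        volume_add_volume_le_volume_add_of_isCompact (hK.insert x) (hL.insert y)
          (insert_nonempty _ _) (insert_nonempty _ _)
    _ ≤ volume (A + B) :=
        measure_mono (add_subset_add (insert_subset hx hKA) (insert_subset hy hLB))

theorem ENNReal.iSup_rpow_mul_iSup_rpow_le {ι : Type*} [Preorder ι] [IsDirectedOrder ι]
    {s t : ℝ} (hs : 0 < s) (ht : 0 < t) {P Q : ι → ℝ≥0∞} (hP : Monotone P) (hQ : Monotone Q)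
    {Z : ℝ≥0∞} (h : ∀ i, P i ^ s * Q i ^ t ≤ Z) : (⨆ i, P i) ^ s * (⨆ i, Q i) ^ t ≤ Z := by
  rw [← orderIsoRpow_apply s hs, ← orderIsoRpow_apply t ht, OrderIso.map_iSup,
    OrderIso.map_iSup, ENNReal.iSup_mul]
  refine iSup_le fun i => ?_
  rw [ENNReal.mul_iSup]
  refine iSup_le fun j => ?_
  obtain ⟨k, hik, hjk⟩ := exists_ge_ge i j
  exact (mul_le_mul' (rpow_le_rpow (hP hik) hs.le) (rpow_le_rpow (hQ hjk) ht.le)).trans (h k)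

namespace Real

variable {s t : ℝ} {F G H : ℝ → ℝ≥0∞}

theorem ofReal_mul_lintegral_add_ofReal_mul_lintegral_le_of_iSup_eq_one
    (hs : 0 < s) (ht : 0 < t) (hst : s + t = 1)
    (hF : Measurable F) (hG : Measurable G) (hH : Measurable H)
    (hF₁ : ⨆ x, F x = 1) (hG₁ : ⨆ x, G x = 1)
    (h : ∀ x y, F x ^ s * G y ^ t ≤ H (s * x + t * y)) :
    ENNReal.ofReal s * (∫⁻ x, F x) + ENNReal.ofReal t * ∫⁻ x, G x ≤ ∫⁻ x, H x := by
  have hlevel : ∀ l ∈ Ioi (0 : ℝ),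
      ENNReal.ofReal s * volume {x | ENNReal.ofReal l < F x} +
        ENNReal.ofReal t * volume {x | ENNReal.ofReal l < G x} ≤
          volume {x | ENNReal.ofReal l < H x} := by
    intro l hl
    rcases lt_or_ge l 1 with hl₁ | hl₁
    · have hne {f : ℝ → ℝ≥0∞} (hf : ⨆ x, f x = 1) : {x | ENNReal.ofReal l < f x}.Nonempty :=
        let ⟨x, hx⟩ := lt_iSup_iff.1 (hf ▸ ofReal_lt_one.2 hl₁); ⟨x, hx⟩
      have hsub := smul_add_smul_subset_setOf_ofReal_lt hs ht h (mem_Ioi.1 hl).le (mem_Ioi.1 hl).le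
      rw [← Real.rpow_add hl, hst, Real.rpow_one] at hsub
      have hsmul {r : ℝ} (hr : 0 < r) (A : Set ℝ) :
          ENNReal.ofReal r * volume A = volume (r • A) := by
        simp [Measure.addHaar_smul, abs_of_pos hr]
      rw [hsmul hs, hsmul ht]
      exact (volume_add_volume_le_volume_add ((hF measurableSet_Ioi).const_smul₀ s)
        ((hG measurableSet_Ioi).const_smul₀ t) (hne hF₁).smul_set (hne hG₁).smul_set).trans
          (measure_mono hsub)
    · have hempty {f : ℝ → ℝ≥0∞} (hf : ⨆ x, f x = 1) : {x | ENNReal.ofReal l < f x} = ∅ :=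
        eq_empty_of_forall_notMem fun x hx => (hx.trans_le (le_iSup f x)).not_ge
          (hf ▸ ENNReal.one_le_ofReal.2 hl₁)
      simp [hempty hF₁, hempty hG₁]
  calc ENNReal.ofReal s * (∫⁻ x, F x) + ENNReal.ofReal t * ∫⁻ x, G x
      = (∫⁻ l in Ioi 0, ENNReal.ofReal s * volume {x | ENNReal.ofReal l < F x}) +
          ∫⁻ l in Ioi 0, ENNReal.ofReal t * volume {x | ENNReal.ofReal l < G x} := by
        rw [lintegral_eq_lintegral_meas_ofReal_lt volume hF,
          lintegral_eq_lintegral_meas_ofReal_lt volume hG,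
          lintegral_const_mul' _ _ ofReal_ne_top, lintegral_const_mul' _ _ ofReal_ne_top]
    _ ≤ ∫⁻ l in Ioi 0, volume {x | ENNReal.ofReal l < H x} :=
        (le_lintegral_add _ _).trans (setLIntegral_mono' measurableSet_Ioi hlevel)
    _ = ∫⁻ x, H x := (lintegral_eq_lintegral_meas_ofReal_lt volume hH).symm

theorem lintegral_rpow_mul_lintegral_rpow_le_of_iSup_ne_top
    (hs : 0 < s) (ht : 0 < t) (hst : s + t = 1)
    (hF : Measurable F) (hG : Measurable G) (hH : Measurable H)
    (hF_top : ⨆ x, F x ≠ ∞) (hG_top : ⨆ x, G x ≠ ∞)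
    (h : ∀ x y, F x ^ s * G y ^ t ≤ H (s * x + t * y)) :
    (∫⁻ x, F x) ^ s * (∫⁻ x, G x) ^ t ≤ ∫⁻ x, H x := by
  set β := ⨆ x, F x
  set γ := ⨆ x, G x
  rcases eq_or_ne β 0 with hβ | hβ
  · simp [ENNReal.iSup_eq_zero.1 hβ, zero_rpow_of_pos hs]
  rcases eq_or_ne γ 0 with hγ | hγ
  · simp [ENNReal.iSup_eq_zero.1 hγ, zero_rpow_of_pos ht]
  -- Rescale `F` and `G` to have supremum `1`; `H` is rescaled by the matching factor `κ`.
  set κ := β⁻¹ ^ s * γ⁻¹ ^ t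
  have hκ₀ : κ ≠ 0 := mul_ne_zero (rpow_pos (ENNReal.inv_pos.2 hF_top) (inv_ne_top.2 hβ)).ne'
    (rpow_pos (ENNReal.inv_pos.2 hG_top) (inv_ne_top.2 hγ)).ne'
  have hκ_top : κ ≠ ∞ := mul_ne_top (rpow_ne_top_of_nonneg hs.le (inv_ne_top.2 hβ))
    (rpow_ne_top_of_nonneg ht.le (inv_ne_top.2 hγ))
  have hnorm := ofReal_mul_lintegral_add_ofReal_mul_lintegral_le_of_iSup_eq_one hs ht hst
    (hF.const_mul β⁻¹) (hG.const_mul γ⁻¹) (hH.const_mul κ)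
    (by rw [← ENNReal.mul_iSup, ENNReal.inv_mul_cancel hβ hF_top])
    (by rw [← ENNReal.mul_iSup, ENNReal.inv_mul_cancel hγ hG_top])
    (fun x y => by
      rw [ENNReal.mul_rpow_of_nonneg _ _ hs.le, ENNReal.mul_rpow_of_nonneg _ _ ht.le,
        mul_mul_mul_comm]
      gcongr
      exact h x y)
  rw [lintegral_const_mul _ hF, lintegral_const_mul _ hG, lintegral_const_mul _ hH] at hnorm
  rw [← ENNReal.mul_le_mul_iff_right hκ₀ hκ_top]
  calc κ * ((∫⁻ x, F x) ^ s * (∫⁻ x, G x) ^ t)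
      = (β⁻¹ * ∫⁻ x, F x) ^ s * (γ⁻¹ * ∫⁻ x, G x) ^ t := by
        rw [ENNReal.mul_rpow_of_nonneg _ _ hs.le, ENNReal.mul_rpow_of_nonneg _ _ ht.le,
          mul_mul_mul_comm]
    _ ≤ ENNReal.ofReal s * (β⁻¹ * ∫⁻ x, F x) + ENNReal.ofReal t * (γ⁻¹ * ∫⁻ x, G x) :=
        ENNReal.geom_mean_le_arith_mean2_weighted hs ht hst _ _
    _ ≤ κ * ∫⁻ x, H x := hnorm

theorem lintegral_rpow_mul_lintegral_rpow_le (hs : 0 < s) (ht : 0 < t) (hst : s + t = 1)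
    (hF : Measurable F) (hG : Measurable G) (hH : Measurable H)
    (h : ∀ x y, F x ^ s * G y ^ t ≤ H (s * x + t * y)) :
    (∫⁻ x, F x) ^ s * (∫⁻ x, G x) ^ t ≤ ∫⁻ x, H x := by
  have hmono (f : ℝ → ℝ≥0∞) : Monotone fun (n : ℕ) x => min (f x) n :=
    fun m n hmn x => min_le_min_left _ (Nat.cast_le.2 hmn)
  have htrunc (f : ℝ → ℝ≥0∞) (hf : Measurable f) :
      ∫⁻ x, f x = ⨆ n : ℕ, ∫⁻ x, min (f x) n := by
    rw [← lintegral_iSup (fun n => hf.min measurable_const) (hmono f)]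
    simp only [← inf_iSup_eq, iSup_natCast, inf_top_eq]
  have hsup_top (f : ℝ → ℝ≥0∞) (n : ℕ) : ⨆ x, min (f x) n ≠ ∞ :=
    ne_top_of_le_ne_top (natCast_ne_top n) (iSup_le fun _ => min_le_right _ _)
  rw [htrunc F hF, htrunc G hG]
  refine ENNReal.iSup_rpow_mul_iSup_rpow_le hs ht
    (fun m n hmn => lintegral_mono (hmono F hmn)) (fun m n hmn => lintegral_mono (hmono G hmn))
    fun n => lintegral_rpow_mul_lintegral_rpow_le_of_iSup_ne_top hs ht hst
      (hF.min measurable_const) (hG.min measurable_const) hH (hsup_top F n) (hsup_top G n)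
      fun x y => le_trans ?_ (h x y)
  exact mul_le_mul' (ENNReal.rpow_le_rpow (min_le_left _ _) hs.le)
    (ENNReal.rpow_le_rpow (min_le_left _ _) ht.le)

end Real

section LevelSets

variable {α : Type*} [MeasurableSpace α]

/-- The tail `u ↦ μ {f > u}` of the layer cake formula in the variable `x = log u`, weighted by
the Jacobian `exp x`. -/
def expTail (μ : Measure α) (f : α → ℝ≥0∞) (x : ℝ) : ℝ≥0∞ :=
  ENNReal.ofReal (Real.exp x) * μ {ω | ENNReal.ofReal (Real.exp x) < f ω}

theorem measurable_expTail (μ : Measure α) (f : α → ℝ≥0∞) : Measurable (expTail μ f) := by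
  have hanti : Antitone fun u : ℝ => μ {ω | ENNReal.ofReal u < f ω} :=
    fun u v huv => measure_mono fun ω hω => (ENNReal.ofReal_le_ofReal huv).trans_lt hω
  exact (ENNReal.measurable_ofReal.comp Real.measurable_exp).mul
    (hanti.measurable.comp Real.measurable_exp)

theorem lintegral_eq_lintegral_expTail (μ : Measure α) [SFinite μ] {f : α → ℝ≥0∞}
    (hf : Measurable f) : ∫⁻ ω, f ω ∂μ = ∫⁻ x, expTail μ f x := by
  rw [lintegral_eq_lintegral_meas_ofReal_lt μ hf, lintegral_Ioi_zero_eq_lintegral_exp_mul]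
  rfl

theorem expTail_rpow_mul_expTail_rpow_le {μ : Measure α} {s t : ℝ} (hs : 0 ≤ s) (ht : 0 ≤ t)
    {a b c : α → ℝ≥0∞}
    (h : ∀ u v : ℝ, 0 < u → 0 < v →
      μ {ω | ENNReal.ofReal u < b ω} ^ s * μ {ω | ENNReal.ofReal v < c ω} ^ t ≤
        μ {ω | ENNReal.ofReal (u ^ s * v ^ t) < a ω})
    (x y : ℝ) : expTail μ b x ^ s * expTail μ c y ^ t ≤ expTail μ a (s * x + t * y) := by
  have hexp : Real.exp x ^ s * Real.exp y ^ t = Real.exp (s * x + t * y) := by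
    rw [← Real.exp_mul, ← Real.exp_mul, ← Real.exp_add, mul_comm x, mul_comm y]
  have hofReal : ENNReal.ofReal (Real.exp x) ^ s * ENNReal.ofReal (Real.exp y) ^ t =
      ENNReal.ofReal (Real.exp (s * x + t * y)) := by
    rw [ofReal_rpow_of_nonneg (Real.exp_pos x).le hs, ofReal_rpow_of_nonneg (Real.exp_pos y).le ht,
      ← ENNReal.ofReal_mul (by positivity), hexp]
  calc expTail μ b x ^ s * expTail μ c y ^ t
      = (ENNReal.ofReal (Real.exp x) ^ s * ENNReal.ofReal (Real.exp y) ^ t) *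
          (μ {ω | ENNReal.ofReal (Real.exp x) < b ω} ^ s *
            μ {ω | ENNReal.ofReal (Real.exp y) < c ω} ^ t) := by
        simp only [expTail, mul_rpow_of_nonneg _ _ hs, mul_rpow_of_nonneg _ _ ht]
        ring
    _ ≤ ENNReal.ofReal (Real.exp (s * x + t * y)) *
          μ {ω | ENNReal.ofReal (Real.exp x ^ s * Real.exp y ^ t) < a ω} := by
        rw [hofReal]
        gcongr
        exact h _ _ (Real.exp_pos x) (Real.exp_pos y)
    _ = expTail μ a (s * x + t * y) := by
        rw [hexp]
        rfl

theorem lintegral_rpow_mul_lintegral_rpow_le_of_measure_lt (μ : Measure α) [SFinite μ]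
    {s t : ℝ} (hs : 0 < s) (ht : 0 < t) (hst : s + t = 1) {a b c : α → ℝ≥0∞}
    (ha : Measurable a) (hb : Measurable b) (hc : Measurable c)
    (h : ∀ u v : ℝ, 0 < u → 0 < v →
      μ {ω | ENNReal.ofReal u < b ω} ^ s * μ {ω | ENNReal.ofReal v < c ω} ^ t ≤
        μ {ω | ENNReal.ofReal (u ^ s * v ^ t) < a ω}) :
    (∫⁻ ω, b ω ∂μ) ^ s * (∫⁻ ω, c ω ∂μ) ^ t ≤ ∫⁻ ω, a ω ∂μ := by
  rw [lintegral_eq_lintegral_expTail μ ha, lintegral_eq_lintegral_expTail μ hb,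
    lintegral_eq_lintegral_expTail μ hc]
  exact Real.lintegral_rpow_mul_lintegral_rpow_le hs ht hst (measurable_expTail μ b)
    (measurable_expTail μ c) (measurable_expTail μ a)
    (expTail_rpow_mul_expTail_rpow_le hs.le ht.le h)

end LevelSets

theorem measure_rpow_mul_measure_rpow_le_of_isCompact {E : Type*} [AddCommGroup E] [Module ℝ E]
    [TopologicalSpace E] [MeasurableSpace E] {μ : Measure E} [IsFiniteMeasure μ] [μ.InnerRegular]
    {s t : ℝ} (hs : 0 < s) (ht : 0 < t) (hst : s + t = 1)
    (h : ∀ K L : Set E, IsCompact K → IsCompact L → μ K ^ s * μ L ^ t ≤ μ (s • K + t • L))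
    {A B : Set E} (hA : MeasurableSet A) (hB : MeasurableSet B) :
    μ A ^ s * μ B ^ t ≤ μ (s • A + t • B) := by
  refine ENNReal.le_of_forall_lt_one_mul_le fun q hq => ?_
  rcases eq_or_ne q 0 with rfl | hq₀
  · simp
  rcases eq_or_ne (μ A) 0 with hA₀ | hA₀
  · simp [hA₀, zero_rpow_of_pos hs]
  rcases eq_or_ne (μ B) 0 with hB₀ | hB₀
  · simp [hB₀, zero_rpow_of_pos ht]
  have hlt {C : Set E} (hC : μ C ≠ 0) : q * μ C < μ C := by
    simpa using (ENNReal.mul_lt_mul_iff_left hC (measure_ne_top μ C)).2 hq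
  obtain ⟨K, hKA, hK, hqK⟩ := hA.exists_lt_isCompact (hlt hA₀)
  obtain ⟨L, hLB, hL, hqL⟩ := hB.exists_lt_isCompact (hlt hB₀)
  calc q * (μ A ^ s * μ B ^ t) = (q * μ A) ^ s * (q * μ B) ^ t := by
        rw [mul_rpow_of_nonneg _ _ hs.le, mul_rpow_of_nonneg _ _ ht.le, mul_mul_mul_comm,
          ← rpow_add _ _ hq₀ hq.ne_top, hst, rpow_one]
    _ ≤ μ K ^ s * μ L ^ t := by gcongr
    _ ≤ μ (s • K + t • L) := h K L hK hL
    _ ≤ μ (s • A + t • B) :=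
        measure_mono (add_subset_add (smul_set_mono hKA) (smul_set_mono hLB))

section Tent

open Metric

variable {E : Type*}

section PseudoMetricSpace

variable [PseudoMetricSpace E] {S : Set E} {δ : ℝ}

def tent (S : Set E) (δ : ℝ) (x : E) : ℝ := max (1 - infDist x S / δ) 0

theorem continuous_tent (S : Set E) (δ : ℝ) : Continuous (tent S δ) :=
  (continuous_const.sub ((continuous_infDist_pt S).div_const δ)).max continuous_const

theorem tent_nonneg (x : E) : 0 ≤ tent S δ x := le_max_right _ _

theorem indicator_one_le_tent : S.indicator 1 ≤ tent S δ := by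
  intro x
  by_cases hx : x ∈ S
  · simp [hx, tent, infDist_zero_of_mem hx]
  · simpa [hx] using tent_nonneg x

theorem tent_le_indicator_one_cthickening (hS : S.Nonempty) (hδ : 0 < δ) :
    tent S δ ≤ (cthickening δ S).indicator 1 := by
  intro x
  by_cases hx : x ∈ cthickening δ S
  · have : 0 ≤ infDist x S / δ := div_nonneg infDist_nonneg hδ.le
    simpa [hx, tent] using this
  · have : δ ≤ infDist x S := not_lt.1 fun h =>
      hx (thickening_subset_cthickening δ S ((mem_thickening_iff_infDist_lt hS).2 h))
    simpa [hx, tent, one_le_div hδ] using this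

theorem hasCompactSupport_tent [ProperSpace E] (hS : IsCompact S) (hS₀ : S.Nonempty)
    (hδ : 0 < δ) : HasCompactSupport (tent S δ) :=
  HasCompactSupport.intro (hS.cthickening (r := δ)) fun x hx => le_antisymm
    (by simpa [indicator_of_notMem hx] using tent_le_indicator_one_cthickening hS₀ hδ x)
    (tent_nonneg x)

end PseudoMetricSpace

variable [NormedAddCommGroup E] [NormedSpace ℝ E] {K L : Set E} {δ s t : ℝ}

theorem infDist_smul_add_smul_le (hs : 0 ≤ s) (ht : 0 ≤ t) (hK : IsCompact K) (hK₀ : K.Nonempty)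
    (hL : IsCompact L) (hL₀ : L.Nonempty) (x y : E) :
    infDist (s • x + t • y) (s • K + t • L) ≤ s * infDist x K + t * infDist y L := by
  obtain ⟨k, hk, hxk⟩ := hK.exists_infDist_eq_dist hK₀ x
  obtain ⟨l, hl, hyl⟩ := hL.exists_infDist_eq_dist hL₀ y
  calc infDist (s • x + t • y) (s • K + t • L) ≤ dist (s • x + t • y) (s • k + t • l) :=
        infDist_le_dist_of_mem (add_mem_add (smul_mem_smul_set hk) (smul_mem_smul_set hl))
    _ = ‖s • (x - k) + t • (y - l)‖ := by
        rw [dist_eq_norm]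
        congr 1
        module
    _ ≤ s * infDist x K + t * infDist y L := by
        rw [hxk, hyl, dist_eq_norm, dist_eq_norm]
        refine (norm_add_le _ _).trans_eq ?_
        rw [norm_smul, norm_smul, Real.norm_of_nonneg hs, Real.norm_of_nonneg ht]

theorem tent_rpow_mul_tent_rpow_le (hs : 0 < s) (ht : 0 < t) (hst : s + t = 1) (hδ : 0 ≤ δ)
    (hK : IsCompact K) (hK₀ : K.Nonempty) (hL : IsCompact L) (hL₀ : L.Nonempty) (x y : E) :
    tent K δ x ^ s * tent L δ y ^ t ≤ tent (s • K + t • L) δ (s • x + t • y) := by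
  rcases (tent_nonneg (S := K) (δ := δ) x).eq_or_lt with hx | hx
  · rw [← hx, Real.zero_rpow hs.ne', zero_mul]
    exact tent_nonneg _
  rcases (tent_nonneg (S := L) (δ := δ) y).eq_or_lt with hy | hy
  · rw [← hy, Real.zero_rpow ht.ne', mul_zero]
    exact tent_nonneg _
  have hx' : tent K δ x = 1 - infDist x K / δ := max_eq_left_of_lt (by simpa [tent] using hx)
  have hy' : tent L δ y = 1 - infDist y L / δ := max_eq_left_of_lt (by simpa [tent] using hy)
  calc tent K δ x ^ s * tent L δ y ^ t ≤ s * tent K δ x + t * tent L δ y :=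
        Real.geom_mean_le_arith_mean2_weighted hs.le ht.le hx.le hy.le hst
    _ = 1 - (s * infDist x K + t * infDist y L) / δ := by
        rw [hx', hy']
        linear_combination hst
    _ ≤ 1 - infDist (s • x + t • y) (s • K + t • L) / δ := by
        gcongr
        exact infDist_smul_add_smul_le hs.le ht.le hK hK₀ hL hL₀ x y
    _ ≤ tent (s • K + t • L) δ (s • x + t • y) := le_max_left _ _

end Tent

namespace PrekopaLeindler

open Metric Filter

variable {E : Type*} [NormedAddCommGroup E] [NormedSpace ℝ E] [ProperSpace E]
  [MeasurableSpace E] [BorelSpace E] {ρ : Measure E} [IsFiniteMeasure ρ]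
  {s t : ℝ} {K L : Set E}

theorem measure_rpow_mul_measure_rpow_le_cthickening (h : PrekopaLeindler ρ) (hs : 0 < s)
    (ht : 0 < t) (hst : s + t = 1) (hK : IsCompact K) (hK₀ : K.Nonempty) (hL : IsCompact L)
    (hL₀ : L.Nonempty) {δ : ℝ} (hδ : 0 < δ) :
    ρ K ^ s * ρ L ^ t ≤ ρ (cthickening δ (s • K + t • L)) := by
  set S := s • K + t • L
  have hS : IsCompact S := (hK.smul s).add (hL.smul t)
  have hS₀ : S.Nonempty := hK₀.smul_set.add hL₀.smul_set
  have hint {C : Set E} (hC : IsCompact C) (hC₀ : C.Nonempty) : Integrable (tent C δ) ρ :=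
    (continuous_tent C δ).integrable_of_hasCompactSupport (hasCompactSupport_tent hC hC₀ hδ)
  have hlower {C : Set E} (hC : IsCompact C) (hC₀ : C.Nonempty) :
      ρ.real C ≤ ∫ x, tent C δ x ∂ρ := by
    rw [← integral_indicator_one hC.measurableSet]
    exact integral_mono ((integrable_const 1).indicator hC.measurableSet) (hint hC hC₀)
      indicator_one_le_tent
  have hupper : ∫ x, tent S δ x ∂ρ ≤ ρ.real (cthickening δ S) := by
    rw [← integral_indicator_one isClosed_cthickening.measurableSet]
    exact integral_mono (hint hS hS₀)
      ((integrable_const 1).indicator isClosed_cthickening.measurableSet)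
      (tent_le_indicator_one_cthickening hS₀ hδ)
  have hPL := h s t hs.le ht.le hst (tent S δ) (tent K δ) (tent L δ) (continuous_tent S δ)
    (continuous_tent K δ) (continuous_tent L δ) (hasCompactSupport_tent hS hS₀ hδ)
    (hasCompactSupport_tent hK hK₀ hδ) (hasCompactSupport_tent hL hL₀ hδ) tent_nonneg
    tent_nonneg tent_nonneg (tent_rpow_mul_tent_rpow_le hs ht hst hδ.le hK hK₀ hL hL₀)
  rw [← ENNReal.toReal_le_toReal (by finiteness) (measure_ne_top _ _), toReal_mul,
    ← toReal_rpow, ← toReal_rpow]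
  calc ρ.real K ^ s * ρ.real L ^ t ≤ (∫ x, tent K δ x ∂ρ) ^ s * (∫ x, tent L δ x ∂ρ) ^ t := by
        exact mul_le_mul (Real.rpow_le_rpow measureReal_nonneg (hlower hK hK₀) hs.le)
          (Real.rpow_le_rpow measureReal_nonneg (hlower hL hL₀) ht.le)
          (Real.rpow_nonneg measureReal_nonneg t) (Real.rpow_nonneg (integral_nonneg tent_nonneg) s)
    _ ≤ ∫ x, tent S δ x ∂ρ := hPL
    _ ≤ ρ.real (cthickening δ S) := hupper

theorem measure_rpow_mul_measure_rpow_le (h : PrekopaLeindler ρ) (hs : 0 < s) (ht : 0 < t)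
    (hst : s + t = 1) (hK : IsCompact K) (hL : IsCompact L) :
    ρ K ^ s * ρ L ^ t ≤ ρ (s • K + t • L) := by
  rcases K.eq_empty_or_nonempty with rfl | hK₀
  · simp [zero_rpow_of_pos hs]
  rcases L.eq_empty_or_nonempty with rfl | hL₀
  · simp [zero_rpow_of_pos ht]
  exact ge_of_tendsto
    ((tendsto_measure_cthickening_of_isCompact ((hK.smul s).add (hL.smul t))).mono_left
      nhdsWithin_le_nhds)
    (eventually_nhdsWithin_of_forall (s := Ioi 0) fun δ hδ =>
      h.measure_rpow_mul_measure_rpow_le_cthickening hs ht hst hK hK₀ hL hL₀ hδ)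

end PrekopaLeindler

/-- If a finite measure satisfies the Prékopa–Leindler property
(for continuous compactly supported test functions), then it satisfies it for
nonnegative Borel test functions as well. -/
theorem prekopaLeindler_borel_of_continuous {d : ℕ}
    (ρ : Measure (EuclideanSpace ℝ (Fin d))) [IsFiniteMeasure ρ]
    (h : PrekopaLeindler ρ) :
    ∀ s t : ℝ, 0 ≤ s → 0 ≤ t → s + t = 1 →
      ∀ a b c : EuclideanSpace ℝ (Fin d) → ℝ≥0∞,
        Measurable a → Measurable b → Measurable c →
        (∀ x y, b x ^ s * c y ^ t ≤ a (s • x + t • y)) →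
        (∫⁻ x, b x ∂ρ) ^ s * (∫⁻ x, c x ∂ρ) ^ t ≤ ∫⁻ x, a x ∂ρ := by
  intro s t hs ht hst a b c ha hb hc hyp
  rcases hs.eq_or_lt with rfl | hs
  · obtain rfl : t = 1 := by linarith
    simpa using lintegral_mono fun y => by simpa using hyp y y
  rcases ht.eq_or_lt with rfl | ht
  · obtain rfl : s = 1 := by linarith
    simpa using lintegral_mono fun x => by simpa using hyp x x
  refine lintegral_rpow_mul_lintegral_rpow_le_of_measure_lt ρ hs ht hst ha hb hc
    fun u v hu hv => ?_
  exact (measure_rpow_mul_measure_rpow_le_of_isCompact hs ht hst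
    (fun K L hK hL => h.measure_rpow_mul_measure_rpow_le hs ht hst hK hL)
    (hb measurableSet_Ioi) (hc measurableSet_Ioi)).trans
      (measure_mono (smul_add_smul_subset_setOf_ofReal_lt hs ht hyp hu.le hv.le))
end
end

section
/- Let ρ be a finite Borel measure on ℝ^d satisfying the Prékopa–Leindler property and let F : ℝ^d → ℝ be a convex function. Then the measure ν defined by dν(x) = e^{−F(x)} dρ(x) (the measure with density x ↦ exp(−F(x)) with respect to ρ) also satisfies the Prékopa–Leindler property. -/
/-!
The density `w = exp (-F)` is continuous and log-concave (convexity of `F` is exactly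
log-concavity of `exp (-F)`). Hence multiplying the test functions `a, b, c` by `w` keeps them
continuous, compactly supported and nonnegative, and preserves the hypothesis
`b x ^ s * c y ^ t ≤ a (s • x + t • y)`; since `∫ g dν = ∫ g w dρ`, the Prékopa–Leindler
inequality for `ν` is the one for `ρ` applied to `a w, b w, c w`.
-/

open MeasureTheory Pointwise ENNReal

noncomputable section

theorem integral_withDensity_ofReal {X : Type*} [MeasurableSpace X] {μ : Measure X}
    {w : X → ℝ} (hw : AEMeasurable w μ) (hw0 : ∀ x, 0 ≤ w x) (g : X → ℝ) :
    ∫ x, g x ∂μ.withDensity (fun x => ENNReal.ofReal (w x)) = ∫ x, g x * w x ∂μ := by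
  rw [integral_withDensity_eq_integral_toReal_smul₀ hw.ennreal_ofReal
    (Filter.Eventually.of_forall fun _ => ENNReal.ofReal_lt_top)]
  simp only [ENNReal.toReal_ofReal (hw0 _), smul_eq_mul, mul_comm]

theorem ConvexOn.isLogConcave_exp_neg {E : Type*} [AddCommGroup E] [Module ℝ E] {F : E → ℝ}
    (hF : ConvexOn ℝ Set.univ F) : IsLogConcave fun x => Real.exp (-F x) := by
  intro x y s t hs ht hst
  rw [← Real.exp_mul, ← Real.exp_mul, ← Real.exp_add, Real.exp_le_exp]
  have := hF.2 (Set.mem_univ x) (Set.mem_univ y) hs ht hst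
  simp only [smul_eq_mul] at this
  linarith

theorem mul_rpow_mul_mul_rpow_le_mul {a b c u v w s t : ℝ} (hb : 0 ≤ b) (hc : 0 ≤ c)
    (hu : 0 ≤ u) (hv : 0 ≤ v) (habc : b ^ s * c ^ t ≤ a) (huvw : u ^ s * v ^ t ≤ w) :
    (b * u) ^ s * (c * v) ^ t ≤ a * w :=
  calc (b * u) ^ s * (c * v) ^ t = (b ^ s * c ^ t) * (u ^ s * v ^ t) := by
        rw [Real.mul_rpow hb hu, Real.mul_rpow hc hv]; ring
    _ ≤ a * w := by gcongr; exact (by positivity : (0 : ℝ) ≤ b ^ s * c ^ t).trans habc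

theorem PrekopaLeindler.withDensity_ofReal {E : Type*} [AddCommGroup E] [Module ℝ E]
    [TopologicalSpace E] [MeasurableSpace E] [OpensMeasurableSpace E] {ρ : Measure E}
    (hρ : PrekopaLeindler ρ) {w : E → ℝ} (hw : Continuous w) (hw0 : ∀ x, 0 ≤ w x)
    (hlc : IsLogConcave w) :
    PrekopaLeindler (ρ.withDensity fun x => ENNReal.ofReal (w x)) := by
  intro s t hs ht hst a b c ha hb hc hsa hsb hsc ha0 hb0 hc0 habc
  simp only [integral_withDensity_ofReal hw.measurable.aemeasurable hw0]
  exact hρ s t hs ht hst (fun x => a x * w x) (fun x => b x * w x) (fun x => c x * w x)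
    (ha.mul hw) (hb.mul hw) (hc.mul hw) hsa.mul_right hsb.mul_right hsc.mul_right
    (fun x => mul_nonneg (ha0 x) (hw0 x)) (fun x => mul_nonneg (hb0 x) (hw0 x))
    (fun x => mul_nonneg (hc0 x) (hw0 x))
    (fun x y => mul_rpow_mul_mul_rpow_le_mul (hb0 x) (hc0 y) (hw0 x) (hw0 y) (habc x y)
      (hlc x y s t hs ht hst))

theorem prekopaLeindler_withDensity_exp_neg_convex_general {d : ℕ}
    (ρ : Measure (EuclideanSpace ℝ (Fin d)))
    (hρ : PrekopaLeindler ρ)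
    (F : EuclideanSpace ℝ (Fin d) → ℝ) (hF : ConvexOn ℝ Set.univ F) :
    PrekopaLeindler (ρ.withDensity fun x => ENNReal.ofReal (Real.exp (-F x))) := by
  have hFc : Continuous F := continuousOn_univ.mp (hF.continuousOn isOpen_univ)
  exact hρ.withDensity_ofReal hFc.neg.rexp (fun x => (Real.exp_pos _).le)
    hF.isLogConcave_exp_neg

/-- If `ρ` is a finite measure with the Prékopa–Leindler property
and `F` is convex, then `dν = exp (-F) dρ` also has the Prékopa–Leindler property. -/
theorem prekopaLeindler_withDensity_exp_neg_convex {d : ℕ}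
    (ρ : Measure (EuclideanSpace ℝ (Fin d))) [IsFiniteMeasure ρ]
    (hρ : PrekopaLeindler ρ)
    (F : EuclideanSpace ℝ (Fin d) → ℝ) (hF : ConvexOn ℝ Set.univ F) :
    PrekopaLeindler (ρ.withDensity fun x => ENNReal.ofReal (Real.exp (-F x))) :=
  prekopaLeindler_withDensity_exp_neg_convex_general ρ hρ F hF
end
end

section
/- Let f, f₀, f₁ be nonnegative, bounded, Borel measurable functions on ℝ^n and let α, β ∈ [0,1] with α + β = 1. Suppose that for all compact sets C₀, C₁ ⊆ ℝ^n one has ∫_{αC₀+βC₁} f(x) dx ≥ (∫_{C₀} f₀(x) dx)^α · (∫_{C₁} f₁(x) dx)^β, where αC₀ + βC₁ = { α·c₀ + β·c₁ : c₀ ∈ C₀, c₁ ∈ C₁ } and the integrals are with respect to Lebesgue measure. Then for every x₀, x₁ ∈ ℝ^n, one has f(z + α·x₀ + β·x₁) ≥ f₀(z + x₀)^α · f₁(z + x₁)^β for Lebesgue-almost every z ∈ ℝ^n. -/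
/-!
Average the set-wise inequality over small balls: since
`α • B(a, r) + β • B(b, r) = B(α • a + β • b, r)` and all balls of radius `r` have the same volume
`V`, the normalising factors combine as `(V⁻¹)^α (V⁻¹)^β = V⁻¹`, so the inequality holds for the
averages of `f₀, f₁, f` over these balls. Letting `r → 0`, the Lebesgue differentiation theorem
turns the averages into point values at almost every centre.
-/

open MeasureTheory Pointwise ENNReal

noncomputable section

open Metric Filter Topology

lemma Real.mul_rpow_mul_mul_rpow_of_add_eq_one {c a b α β : ℝ} (hc : 0 ≤ c) (ha : 0 ≤ a)
    (hb : 0 ≤ b) (hαβ : α + β = 1) : (c * a) ^ α * (c * b) ^ β = c * (a ^ α * b ^ β) := by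
  rw [Real.mul_rpow hc ha, Real.mul_rpow hc hb, mul_mul_mul_comm,
    ← Real.rpow_add' hc (by simp [hαβ]), hαβ, Real.rpow_one]

lemma locallyIntegrable_of_norm_le {X F : Type*} [TopologicalSpace X] [MeasurableSpace X]
    [NormedAddCommGroup F] {μ : Measure X} [IsLocallyFiniteMeasure μ] {g : X → F}
    (hg : AEStronglyMeasurable g μ) {C : ℝ} (hC : ∀ x, ‖g x‖ ≤ C) : LocallyIntegrable g μ :=
  (locallyIntegrable_const C).mono hg (ae_of_all _ fun x => (hC x).trans (le_abs_self C))

lemma setAverage_closedBall_eq {E : Type*} [NormedAddCommGroup E] [MeasurableSpace E]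
    [BorelSpace E] (μ : Measure E) [μ.IsAddHaarMeasure] (g : E → ℝ) (c : E) (r : ℝ) :
    ⨍ y in closedBall c r, g y ∂μ =
      (μ.real (closedBall 0 r))⁻¹ * ∫ y in closedBall c r, g y ∂μ := by
  rw [setAverage_eq, measureReal_def, Measure.addHaar_closedBall_center, measureReal_def,
    smul_eq_mul]

section NormedSpace

variable {E : Type*} [NormedAddCommGroup E] [NormedSpace ℝ E]

lemma smul_closedBall_add_smul_closedBall [ProperSpace E] {α β r : ℝ} (hα : 0 ≤ α) (hβ : 0 ≤ β)
    (hαβ : α + β = 1) (hr : 0 ≤ r) (a b : E) :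
    α • closedBall a r + β • closedBall b r = closedBall (α • a + β • b) r := by
  rw [smul_closedBall _ _ hr, smul_closedBall _ _ hr,
    closedBall_add_closedBall (by positivity) (by positivity), Real.norm_of_nonneg hα,
    Real.norm_of_nonneg hβ, ← add_mul, hαβ, one_mul]

variable [MeasurableSpace E] [BorelSpace E]

lemma rpow_setAverage_closedBall_mul_rpow_le [ProperSpace E] (μ : Measure E) [μ.IsAddHaarMeasure]
    {f f₀ f₁ : E → ℝ} (hf₀ : ∀ x, 0 ≤ f₀ x) (hf₁ : ∀ x, 0 ≤ f₁ x) {α β : ℝ} (hα : 0 ≤ α)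
    (hβ : 0 ≤ β) (hαβ : α + β = 1) {a b : E} {r : ℝ} (hr : 0 ≤ r)
    (h : (∫ x in closedBall a r, f₀ x ∂μ) ^ α * (∫ x in closedBall b r, f₁ x ∂μ) ^ β ≤
      ∫ x in α • closedBall a r + β • closedBall b r, f x ∂μ) :
    (⨍ x in closedBall a r, f₀ x ∂μ) ^ α * (⨍ x in closedBall b r, f₁ x ∂μ) ^ β ≤
      ⨍ x in closedBall (α • a + β • b) r, f x ∂μ := by
  rw [smul_closedBall_add_smul_closedBall hα hβ hαβ hr] at h
  simp only [setAverage_closedBall_eq μ]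
  rw [Real.mul_rpow_mul_mul_rpow_of_add_eq_one (by positivity)
    (setIntegral_nonneg measurableSet_closedBall fun x _ => hf₀ x)
    (setIntegral_nonneg measurableSet_closedBall fun x _ => hf₁ x) hαβ]
  gcongr

lemma ae_tendsto_setAverage_closedBall [FiniteDimensional ℝ E] (μ : Measure E)
    [IsLocallyFiniteMeasure μ] {F : Type*} [NormedAddCommGroup F] [NormedSpace ℝ F]
    [CompleteSpace F] {g : E → F} (hg : LocallyIntegrable g μ) :
    ∀ᵐ x ∂μ, Tendsto (fun r => ⨍ y in closedBall x r, g y ∂μ) (𝓝[>] 0) (𝓝 (g x)) := by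
  filter_upwards [(Besicovitch.vitaliFamily μ).ae_tendsto_average hg] with x hx
  exact hx.comp (Besicovitch.tendsto_filterAt μ x)

end NormedSpace

/-- (A version of Borell's lemma.) If nonnegative bounded Borel
functions `f, f₀, f₁` on `ℝ^n` satisfy the set-wise Prékopa–Leindler inequality for
all compact sets, then they satisfy the pointwise inequality almost everywhere. -/
theorem pointwise_of_setwise_prekopaLeindler {n : ℕ}
    (f f₀ f₁ : EuclideanSpace ℝ (Fin n) → ℝ)
    (hf : Measurable f) (hf₀ : Measurable f₀) (hf₁ : Measurable f₁)
    (hf0 : ∀ x, 0 ≤ f x) (hf₀0 : ∀ x, 0 ≤ f₀ x) (hf₁0 : ∀ x, 0 ≤ f₁ x)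
    (hfb : ∃ C, ∀ x, f x ≤ C) (hf₀b : ∃ C, ∀ x, f₀ x ≤ C) (hf₁b : ∃ C, ∀ x, f₁ x ≤ C)
    (α β : ℝ) (hα : 0 ≤ α) (hβ : 0 ≤ β) (hαβ : α + β = 1)
    (hyp : ∀ C₀ C₁ : Set (EuclideanSpace ℝ (Fin n)), IsCompact C₀ → IsCompact C₁ →
      (∫ x in C₀, f₀ x) ^ α * (∫ x in C₁, f₁ x) ^ β ≤ ∫ x in α • C₀ + β • C₁, f x) :
    ∀ x₀ x₁ : EuclideanSpace ℝ (Fin n),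
      ∀ᵐ z ∂(volume : Measure (EuclideanSpace ℝ (Fin n))),
        f₀ (z + x₀) ^ α * f₁ (z + x₁) ^ β ≤ f (z + α • x₀ + β • x₁) := by
  intro x₀ x₁
  have hdiff {g : EuclideanSpace ℝ (Fin n) → ℝ} (hg : Measurable g) (hg0 : ∀ x, 0 ≤ g x)
      (hgb : ∃ C, ∀ x, g x ≤ C) (v : EuclideanSpace ℝ (Fin n)) : ∀ᵐ z ∂volume,
      Tendsto (fun r => ⨍ y in closedBall (z + v) r, g y) (𝓝[>] 0) (𝓝 (g (z + v))) := by
    obtain ⟨C, hC⟩ := hgb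
    have hint : LocallyIntegrable g volume := locallyIntegrable_of_norm_le
      hg.aestronglyMeasurable fun x => (Real.norm_of_nonneg (hg0 x)).trans_le (hC x)
    exact (measurePreserving_add_right volume v).quasiMeasurePreserving.ae
      (ae_tendsto_setAverage_closedBall volume hint)
  filter_upwards [hdiff hf₀ hf₀0 hf₀b x₀, hdiff hf₁ hf₁0 hf₁b x₁,
    hdiff hf hf0 hfb (α • x₀ + β • x₁)] with z h₀ h₁ h
  have hcentre : α • (z + x₀) + β • (z + x₁) = z + (α • x₀ + β • x₁) := by
    rw [smul_add, smul_add, add_add_add_comm, ← add_smul, hαβ, one_smul]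
  have hscale : ∀ᶠ r in 𝓝[>] (0 : ℝ),
      (⨍ y in closedBall (z + x₀) r, f₀ y) ^ α * (⨍ y in closedBall (z + x₁) r, f₁ y) ^ β ≤
        ⨍ y in closedBall (z + (α • x₀ + β • x₁)) r, f y := by
    filter_upwards [self_mem_nhdsWithin] with r (hr : 0 < r)
    rw [← hcentre]
    exact rpow_setAverage_closedBall_mul_rpow_le volume hf₀0 hf₁0 hα hβ hαβ hr.le
      (hyp _ _ (isCompact_closedBall _ r) (isCompact_closedBall _ r))
  rw [add_assoc]
  exact le_of_tendsto_of_tendsto ((h₀.rpow_const (Or.inr hα)).mul (h₁.rpow_const (Or.inr hβ)))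
    h hscale
end
end

section
/- Let φ(x) = exp(−|x|²/2) on ℝ^n and for τ > 0 let P_τ denote the Ornstein–Uhlenbeck (Mehler) semigroup, P_τ f(x) = (2π(1−e^{−2τ}))^{−n/2} ∫_{ℝ^n} f(y) exp(−|y − e^{−τ}x|²/(2(1−e^{−2τ}))) dy. Let s, t ≥ 0 with s + t = 1 and let a, b, c be nonnegative bounded Borel functions on ℝ^n such that a(s·x + t·y)·φ(s·x + t·y) ≥ (b(x)·φ(x))^s · (c(y)·φ(y))^t for all x, y ∈ ℝ^n. Then for every τ > 0, P_τa(s·x + t·y)·φ(s·x + t·y) ≥ (P_τb(x)·φ(x))^s · (P_τc(y)·φ(y))^t for all x, y ∈ ℝ^n. -/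
/-!
Writing `φ(x) = exp(-|x|²/2)`, `r = e^{-τ}` and `K(w) = exp(-|w|²/(2(1 - r²)))`, the
Mehler kernel satisfies detailed balance with respect to `φ`, which gives
`P_τ f(x) φ(x) = C_τ ∫ f(u) φ(u) K(r u - x) du`.
Since `K` is log-concave and `(u, x) ↦ r u - x` is linear, the three integrands obtained from
`a`, `b`, `c` again satisfy the Prékopa–Leindler hypothesis in `u`, and the Prékopa–Leindler
inequality on `ℝⁿ` gives the claim.

Prékopa–Leindler is proved for functions dominated by a Gaussian. In dimension one, after
normalising the suprema of `f` and `g` to `1`, the superlevel sets satisfy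
`s {f > λ} + t {g > λ} ⊆ {h > λ}`, so the one-dimensional Brunn–Minkowski inequality and the
layer-cake formula give `s ∫ f + t ∫ g ≤ ∫ h`, and AM–GM turns this into the multiplicative form.
In higher dimensions one inducts on `n`, applying
the one-dimensional inequality to the marginals in the first coordinate.
-/

open MeasureTheory Pointwise ENNReal

noncomputable section

/-- The Ornstein–Uhlenbeck (Mehler) semigroup on `ℝ^n`. -/
def ornsteinUhlenbeck {n : ℕ} (τ : ℝ) (f : EuclideanSpace ℝ (Fin n) → ℝ)
    (x : EuclideanSpace ℝ (Fin n)) : ℝ :=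
  (2 * Real.pi * (1 - Real.exp (-2 * τ))) ^ (-(n : ℝ) / 2) *
    ∫ y, f y * Real.exp (-‖y - Real.exp (-τ) • x‖ ^ 2 / (2 * (1 - Real.exp (-2 * τ))))


open Set

theorem brunn_minkowski_real_of_isCompact {K L S : Set ℝ} (hK : IsCompact K) (hL : IsCompact L)
    (hK₀ : K.Nonempty) (hL₀ : L.Nonempty) (hKL : K + L ⊆ S) :
    volume K + volume L ≤ volume S := by
  set U := sInf L +ᵥ K
  set V := sSup K +ᵥ L
  -- `U` and `V` lie in `K + L` and meet only at `sSup K + sInf L`.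
  have hUV : U ∩ V ⊆ {sSup K + sInf L} := by
    rintro _ ⟨⟨k, hk, rfl⟩, ⟨l, hl, hkl⟩⟩
    have := le_csSup hK.bddAbove hk
    have := csInf_le hL.bddBelow hl
    simp only [vadd_eq_add] at hkl ⊢
    rw [mem_singleton_iff]
    linarith
  have hU : U ⊆ S := by
    rintro _ ⟨k, hk, rfl⟩
    exact hKL (by simpa [add_comm] using add_mem_add hk (hL.sInf_mem hL₀))
  have hV : V ⊆ S := fun _ ⟨l, hl, hx⟩ => hKL (hx ▸ add_mem_add (hK.sSup_mem hK₀) hl)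
  calc volume K + volume L = volume U + volume V := by rw [measure_vadd, measure_vadd]
    _ = volume (U ∪ V) + volume (U ∩ V) :=
        (measure_union_add_inter U (hL.measurableSet.const_vadd _)).symm
    _ ≤ volume S + 0 := add_le_add (measure_mono (union_subset hU hV))
        ((measure_mono hUV).trans (measure_singleton _).le)
    _ = volume S := add_zero _

theorem brunn_minkowski_real {A B S : Set ℝ} (hA : MeasurableSet A) (hB : MeasurableSet B)
    (hA₀ : A.Nonempty) (hB₀ : B.Nonempty) (hAB : A + B ⊆ S) :
    volume A + volume B ≤ volume S := by
  obtain ⟨a, ha⟩ := hA₀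
  obtain ⟨b, hb⟩ := hB₀
  rw [hA.measure_eq_iSup_isCompact, hB.measure_eq_iSup_isCompact]
  simp only [iSup_and']
  refine ENNReal.biSup_add_biSup_le' ⟨∅, empty_subset _, isCompact_empty⟩
    ⟨∅, empty_subset _, isCompact_empty⟩ fun K ⟨hKA, hK⟩ L ⟨hLB, hL⟩ => ?_
  calc volume K + volume L ≤ volume (insert a K) + volume (insert b L) :=
        add_le_add (measure_mono (subset_insert _ _)) (measure_mono (subset_insert _ _))
    _ ≤ volume S := brunn_minkowski_real_of_isCompact (hK.insert a) (hL.insert b)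
        (insert_nonempty _ _) (insert_nonempty _ _)
        ((add_subset_add (insert_subset ha hKA) (insert_subset hb hLB)).trans hAB)

theorem lintegral_add_le_of_min_le {s t : ℝ} (hs : 0 ≤ s) (ht : 0 ≤ t) {f g h : ℝ → ℝ}
    (hf : Measurable f) (hg : Measurable g) (hh : Measurable h)
    (hf₀ : 0 ≤ f) (hg₀ : 0 ≤ g) (hh₀ : 0 ≤ h)
    (hf₁ : IsLUB (range f) 1) (hg₁ : IsLUB (range g) 1)
    (hfgh : ∀ x y, min (f x) (g y) ≤ h (s * x + t * y)) :
    ENNReal.ofReal s * (∫⁻ x, ENNReal.ofReal (f x)) + ENNReal.ofReal t * ∫⁻ x, ENNReal.ofReal (g x)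
      ≤ ∫⁻ x, ENNReal.ofReal (h x) := by
  have hlevel : ∀ l : ℝ, ENNReal.ofReal s * volume {x | l < f x} +
      ENNReal.ofReal t * volume {x | l < g x} ≤ volume {x | l < h x} := by
    intro l
    rcases lt_or_ge l 1 with hl | hl
    · obtain ⟨_, ⟨x, rfl⟩, hx, -⟩ := hf₁.exists_between hl
      obtain ⟨_, ⟨y, rfl⟩, hy, -⟩ := hg₁.exists_between hl
      have hsub : s • {x | l < f x} + t • {x | l < g x} ⊆ {x | l < h x} := by
        rintro _ ⟨_, ⟨x, hx, rfl⟩, _, ⟨y, hy, rfl⟩, rfl⟩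
        exact (lt_min hx hy).trans_le (hfgh x y)
      have hvol : ∀ (r : ℝ) (A : Set ℝ), 0 ≤ r → volume (r • A) = ENNReal.ofReal r * volume A :=
        fun r A hr => by rw [Measure.addHaar_smul_of_nonneg _ hr, Module.finrank_self, pow_one]
      rw [← hvol s _ hs, ← hvol t _ ht]
      exact brunn_minkowski_real ((measurableSet_lt measurable_const hf).const_smul₀ s)
        ((measurableSet_lt measurable_const hg).const_smul₀ t)
        ⟨s • x, smul_mem_smul_set hx⟩ ⟨t • y, smul_mem_smul_set hy⟩ hsub
    · have hempty : ∀ p : ℝ → ℝ, IsLUB (range p) 1 → {x | l < p x} = ∅ := fun p hp =>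
        eq_empty_of_forall_notMem fun x hx => (hx.trans_le (hp.1 (mem_range_self x))).not_ge hl
      simp [hempty f hf₁, hempty g hg₁]
  have hanti : ∀ p : ℝ → ℝ, Measurable fun l : ℝ => volume {x | l < p x} := fun p =>
    Antitone.measurable fun l l' hll' => measure_mono fun x hx => hll'.trans_lt hx
  rw [lintegral_eq_lintegral_meas_lt volume (ae_of_all _ hf₀) hf.aemeasurable,
    lintegral_eq_lintegral_meas_lt volume (ae_of_all _ hg₀) hg.aemeasurable,
    lintegral_eq_lintegral_meas_lt volume (ae_of_all _ hh₀) hh.aemeasurable,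
    ← lintegral_const_mul _ (hanti f), ← lintegral_const_mul _ (hanti g),
    ← lintegral_add_left ((hanti f).const_mul _)]
  exact setLIntegral_mono (hanti h) fun l _ => hlevel l

theorem integral_add_le_of_min_le {s t : ℝ} (hs : 0 ≤ s) (ht : 0 ≤ t) {f g h : ℝ → ℝ}
    (hf : Measurable f) (hg : Measurable g) (hh : Measurable h)
    (hf₀ : 0 ≤ f) (hg₀ : 0 ≤ g) (hh₀ : 0 ≤ h)
    (hf₁ : IsLUB (range f) 1) (hg₁ : IsLUB (range g) 1)
    (hfi : Integrable f) (hgi : Integrable g) (hhi : Integrable h)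
    (hfgh : ∀ x y, min (f x) (g y) ≤ h (s * x + t * y)) :
    s * (∫ x, f x) + t * ∫ x, g x ≤ ∫ x, h x := by
  have := lintegral_add_le_of_min_le hs ht hf hg hh hf₀ hg₀ hh₀ hf₁ hg₁ hfgh
  rw [← ofReal_integral_eq_lintegral_ofReal hfi (ae_of_all _ hf₀),
    ← ofReal_integral_eq_lintegral_ofReal hgi (ae_of_all _ hg₀),
    ← ofReal_integral_eq_lintegral_ofReal hhi (ae_of_all _ hh₀),
    ← ENNReal.ofReal_mul hs, ← ENNReal.ofReal_mul ht,
    ← ENNReal.ofReal_add (mul_nonneg hs (integral_nonneg hf₀))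
      (mul_nonneg ht (integral_nonneg hg₀)),
    ENNReal.ofReal_le_ofReal_iff (integral_nonneg hh₀)] at this
  exact this

theorem min_le_rpow_mul_rpow {a b s t : ℝ} (ha : 0 ≤ a) (hb : 0 ≤ b) (hs : 0 ≤ s) (ht : 0 ≤ t)
    (hst : s + t = 1) : min a b ≤ a ^ s * b ^ t := by
  have hm := le_min ha hb
  calc min a b = min a b ^ s * min a b ^ t := by rw [← Real.rpow_add' hm (by simp [hst]), hst,
        Real.rpow_one]
    _ ≤ a ^ s * b ^ t := mul_le_mul (Real.rpow_le_rpow hm (min_le_left a b) hs)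
        (Real.rpow_le_rpow hm (min_le_right a b) ht) (by positivity) (by positivity)

theorem sSup_range_pos_of_integral_pos {α : Type*} [MeasurableSpace α] {μ : Measure α}
    {f : α → ℝ} (hf : BddAbove (range f)) (hIf : 0 < ∫ x, f x ∂μ) : 0 < sSup (range f) := by
  by_contra! hF
  exact hIf.not_ge (integral_nonpos fun x => (le_csSup hf (mem_range_self x)).trans hF)

theorem isLUB_range_inv_sSup_mul {α : Type*} [Nonempty α] {f : α → ℝ} (hf : BddAbove (range f))
    (hF : 0 < sSup (range f)) : IsLUB (range fun x => (sSup (range f))⁻¹ * f x) 1 := by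
  rw [range_comp' (fun y => (sSup (range f))⁻¹ * y) f, ← inv_mul_cancel₀ hF.ne']
  exact (isLUB_csSup (range_nonempty f) hf).mul_left (inv_nonneg.2 hF.le)

theorem prekopa_leindler_real {s t : ℝ} (hs : 0 < s) (ht : 0 < t) (hst : s + t = 1)
    {f g h : ℝ → ℝ} (hf : Measurable f) (hg : Measurable g) (hh : Measurable h)
    (hf₀ : 0 ≤ f) (hg₀ : 0 ≤ g) (hh₀ : 0 ≤ h) (hfb : BddAbove (range f))
    (hgb : BddAbove (range g)) (hfi : Integrable f) (hgi : Integrable g) (hhi : Integrable h)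
    (hfgh : ∀ x y, f x ^ s * g y ^ t ≤ h (s * x + t * y)) :
    (∫ x, f x) ^ s * (∫ x, g x) ^ t ≤ ∫ x, h x := by
  rcases (integral_nonneg hf₀).eq_or_lt with hIf | hIf
  · rw [← hIf, Real.zero_rpow hs.ne', zero_mul]
    exact integral_nonneg hh₀
  rcases (integral_nonneg hg₀).eq_or_lt with hIg | hIg
  · rw [← hIg, Real.zero_rpow ht.ne', mul_zero]
    exact integral_nonneg hh₀
  -- Rescaled to supremum `1`, `f` and `g` satisfy the weaker hypothesis of
  -- `integral_add_le_of_min_le`; its conclusion implies ours by the AM-GM inequality.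
  set F := sSup (range f)
  set G := sSup (range g)
  have hF : 0 < F := sSup_range_pos_of_integral_pos hfb hIf
  have hG : 0 < G := sSup_range_pos_of_integral_pos hgb hIg
  set K := F ^ s * G ^ t
  have hK : 0 < K := by positivity
  have hmin : ∀ x y, min (F⁻¹ * f x) (G⁻¹ * g y) ≤ K⁻¹ * h (s * x + t * y) := fun x y =>
    calc min (F⁻¹ * f x) (G⁻¹ * g y) ≤ (F⁻¹ * f x) ^ s * (G⁻¹ * g y) ^ t :=
          min_le_rpow_mul_rpow (mul_nonneg (by positivity) (hf₀ x))
            (mul_nonneg (by positivity) (hg₀ y)) hs.le ht.le hst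
      _ = K⁻¹ * (f x ^ s * g y ^ t) := by
          rw [Real.mul_rpow (by positivity) (hf₀ x), Real.mul_rpow (by positivity) (hg₀ y),
            Real.inv_rpow hF.le, Real.inv_rpow hG.le, mul_inv]
          ring
      _ ≤ K⁻¹ * h (s * x + t * y) := by gcongr; exact hfgh x y
  have hlin := integral_add_le_of_min_le hs.le ht.le (hf.const_mul F⁻¹) (hg.const_mul G⁻¹)
    (hh.const_mul K⁻¹) (fun x => mul_nonneg (by positivity) (hf₀ x))
    (fun x => mul_nonneg (by positivity) (hg₀ x)) (fun x => mul_nonneg (by positivity) (hh₀ x))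
    (isLUB_range_inv_sSup_mul hfb hF) (isLUB_range_inv_sSup_mul hgb hG)
    (hfi.const_mul _) (hgi.const_mul _) (hhi.const_mul _) hmin
  rw [integral_const_mul, integral_const_mul, integral_const_mul] at hlin
  calc (∫ x, f x) ^ s * (∫ x, g x) ^ t = K * ((F⁻¹ * ∫ x, f x) ^ s * (G⁻¹ * ∫ x, g x) ^ t) := by
        rw [Real.mul_rpow (by positivity) hIf.le, Real.mul_rpow (by positivity) hIg.le,
          Real.inv_rpow hF.le, Real.inv_rpow hG.le]
        field_simp
        rfl
    _ ≤ K * (K⁻¹ * ∫ x, h x) := mul_le_mul_of_nonneg_left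
        ((Real.geom_mean_le_arith_mean2_weighted hs.le ht.le (by positivity)
          (by positivity) hst).trans hlin) hK.le
    _ = ∫ x, h x := mul_inv_cancel_left₀ hK.ne' _

theorem measurableEmbedding_finCons {α : Type*} [MeasurableSpace α] {n : ℕ} :
    MeasurableEmbedding (fun p : α × (Fin n → α) => (Fin.cons p.1 p.2 : Fin (n + 1) → α)) := by
  convert (MeasurableEquiv.piFinSuccAbove (fun _ : Fin (n + 1) => α) 0).symm.measurableEmbedding
    using 1
  ext p : 1
  simp [Fin.consEquiv]

theorem measurable_comp_finCons {α β : Type*} [MeasurableSpace α] [MeasurableSpace β] {n : ℕ}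
    {f : (Fin (n + 1) → α) → β} (hf : Measurable f) (x₀ : α) :
    Measurable fun z => f (Fin.cons x₀ z) :=
  (hf.comp measurableEmbedding_finCons.measurable).comp measurable_prodMk_left

section FinCons

variable {α : Type*} [MeasureSpace α] [SigmaFinite (volume : Measure α)] {n : ℕ}
  {E : Type*} [NormedAddCommGroup E]

theorem measurePreserving_finCons :
    MeasurePreserving (fun p : α × (Fin n → α) => (Fin.cons p.1 p.2 : Fin (n + 1) → α)) := by
  convert (volume_preserving_piFinSuccAbove (fun _ : Fin (n + 1) => α) 0).symm using 1
  ext p : 1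
  simp [Fin.consEquiv]

theorem integrable_comp_finCons {f : (Fin (n + 1) → α) → E} (hf : Integrable f) :
    Integrable (fun p : α × (Fin n → α) => f (Fin.cons p.1 p.2)) :=
  (measurePreserving_finCons.integrable_comp_emb measurableEmbedding_finCons).2 hf

theorem measurable_integral_finCons {f : (Fin (n + 1) → α) → ℝ} (hf : Measurable f) :
    Measurable fun x₀ => ∫ z, f (Fin.cons x₀ z) :=
  (hf.comp measurableEmbedding_finCons.measurable).stronglyMeasurable.integral_prod_right'
    |>.measurable

theorem integral_integral_finCons [NormedSpace ℝ E] {f : (Fin (n + 1) → α) → E}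
    (hf : Integrable f) :
    ∫ x₀, ∫ z, f (Fin.cons x₀ z) = ∫ x, f x := by
  rw [integral_integral (integrable_comp_finCons hf)]
  exact measurePreserving_finCons.integral_comp measurableEmbedding_finCons f

end FinCons

theorem smul_finCons_add_smul_finCons {R M : Type*} [Semiring R] [AddCommMonoid M] [Module R M]
    {n : ℕ} (s t : R) (x y : M) (z z' : Fin n → M) :
    s • (Fin.cons x z : Fin (n + 1) → M) + t • (Fin.cons y z' : Fin (n + 1) → M) =
      (Fin.cons (s • x + t • y) (s • z + t • z') : Fin (n + 1) → M) := by
  ext i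
  refine Fin.cases ?_ (fun j => ?_) i <;> simp

section ProductWeight

variable {w : ℝ → ℝ}

theorem integrable_of_le_mul_prod {ι : Type*} [Fintype ι] (hw : Integrable w)
    {f : (ι → ℝ) → ℝ} (hf : Measurable f) (hf₀ : 0 ≤ f) {M : ℝ}
    (hfM : ∀ x, f x ≤ M * ∏ i, w (x i)) : Integrable f :=
  ((Integrable.fintype_prod fun _ => hw).const_mul M).mono' hf.aestronglyMeasurable
    (ae_of_all _ fun x => (Real.norm_of_nonneg (hf₀ x)).trans_le (hfM x))

theorem le_mul_prod_finCons {n : ℕ} {f : (Fin (n + 1) → ℝ) → ℝ} {M : ℝ}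
    (hfM : ∀ x, f x ≤ M * ∏ i, w (x i)) (x₀ : ℝ) (z : Fin n → ℝ) :
    f (Fin.cons x₀ z) ≤ M * w x₀ * ∏ j, w (z j) := by
  simpa [Fin.prod_univ_succ, mul_assoc] using hfM (Fin.cons x₀ z)

theorem bddAbove_range_integral_finCons (hw : Integrable w) (hw₀ : 0 ≤ w)
    (hwb : BddAbove (range w)) {n : ℕ} {f : (Fin (n + 1) → ℝ) → ℝ} (hf₀ : 0 ≤ f) {M : ℝ}
    (hfM : ∀ x, f x ≤ M * ∏ i, w (x i)) :
    BddAbove (range fun x₀ => ∫ z, f (Fin.cons x₀ z)) := by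
  obtain ⟨C, hC⟩ := hwb
  set I := ∫ z : Fin n → ℝ, ∏ j, w (z j)
  have hI : 0 ≤ I := integral_nonneg fun z => Finset.prod_nonneg fun j _ => hw₀ _
  refine ⟨|M| * C * I, ?_⟩
  rintro _ ⟨x₀, rfl⟩
  calc ∫ z, f (Fin.cons x₀ z) ≤ ∫ z, M * w x₀ * ∏ j, w (z j) :=
        integral_mono_of_nonneg (ae_of_all _ fun z => hf₀ _)
          ((Integrable.fintype_prod fun _ => hw).const_mul _)
          (ae_of_all _ (le_mul_prod_finCons hfM x₀))
    _ = M * w x₀ * I := integral_const_mul _ _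
    _ ≤ |M| * C * I := mul_le_mul_of_nonneg_right
        (mul_le_mul (le_abs_self M) (hC (mem_range_self x₀)) (hw₀ x₀) (abs_nonneg M)) hI

theorem prekopa_leindler_pi {s t : ℝ} (hs : 0 < s) (ht : 0 < t) (hst : s + t = 1)
    (hw : Integrable w) (hw₀ : 0 ≤ w) (hwb : BddAbove (range w)) {n : ℕ}
    {f g h : (Fin n → ℝ) → ℝ} (hf : Measurable f) (hg : Measurable g) (hh : Measurable h)
    (hf₀ : 0 ≤ f) (hg₀ : 0 ≤ g) (hh₀ : 0 ≤ h) {Mf Mg Mh : ℝ}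
    (hfM : ∀ x, f x ≤ Mf * ∏ i, w (x i)) (hgM : ∀ x, g x ≤ Mg * ∏ i, w (x i))
    (hhM : ∀ x, h x ≤ Mh * ∏ i, w (x i)) (hfgh : ∀ x y, f x ^ s * g y ^ t ≤ h (s • x + t • y)) :
    (∫ x, f x) ^ s * (∫ x, g x) ^ t ≤ ∫ x, h x := by
  induction n generalizing Mf Mg Mh with
  | zero =>
    rw [Measure.volume_pi_eq_dirac 0, integral_dirac, integral_dirac, integral_dirac]
    simpa using hfgh 0 0
  | succ n ih =>
    have hslice : ∀ x₀ y₀ : ℝ, (∫ z, f (Fin.cons x₀ z)) ^ s * (∫ z, g (Fin.cons y₀ z)) ^ t ≤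
        ∫ z, h (Fin.cons (s * x₀ + t * y₀) z) := fun x₀ y₀ =>
      ih (f := fun z => f (Fin.cons x₀ z)) (g := fun z => g (Fin.cons y₀ z))
        (h := fun z => h (Fin.cons (s * x₀ + t * y₀) z))
        (measurable_comp_finCons hf x₀) (measurable_comp_finCons hg y₀)
        (measurable_comp_finCons hh _)
        (fun _ => hf₀ _) (fun _ => hg₀ _) (fun _ => hh₀ _)
        (le_mul_prod_finCons hfM x₀) (le_mul_prod_finCons hgM y₀)
        (le_mul_prod_finCons hhM _) fun z z' =>
          smul_finCons_add_smul_finCons s t x₀ y₀ z z' ▸ hfgh _ _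
    have hfi := integrable_of_le_mul_prod hw hf hf₀ hfM
    have hgi := integrable_of_le_mul_prod hw hg hg₀ hgM
    have hhi := integrable_of_le_mul_prod hw hh hh₀ hhM
    rw [← integral_integral_finCons hfi, ← integral_integral_finCons hgi,
      ← integral_integral_finCons hhi]
    exact prekopa_leindler_real hs ht hst (measurable_integral_finCons hf)
      (measurable_integral_finCons hg) (measurable_integral_finCons hh)
      (fun _ => integral_nonneg fun _ => hf₀ _) (fun _ => integral_nonneg fun _ => hg₀ _)
      (fun _ => integral_nonneg fun _ => hh₀ _) (bddAbove_range_integral_finCons hw hw₀ hwb hf₀ hfM)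
      (bddAbove_range_integral_finCons hw hw₀ hwb hg₀ hgM)
      (integrable_comp_finCons hfi).integral_prod_left
      (integrable_comp_finCons hgi).integral_prod_left
      (integrable_comp_finCons hhi).integral_prod_left hslice

end ProductWeight

theorem integrable_exp_neg_sq_div {c : ℝ} (hc : 0 < c) :
    Integrable fun u : ℝ => Real.exp (-u ^ 2 / c) := by
  convert integrable_exp_neg_mul_sq (inv_pos.2 hc) using 2 with u
  ring_nf

theorem exp_neg_norm_sq_div_le_one {E : Type*} [SeminormedAddCommGroup E] {c : ℝ} (hc : 0 ≤ c)
    (x : E) : Real.exp (-‖x‖ ^ 2 / c) ≤ 1 :=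
  Real.exp_le_one_iff.2 (div_nonpos_of_nonpos_of_nonneg (neg_nonpos.2 (by positivity)) hc)

theorem exp_neg_norm_toLp_sq_div {ι : Type*} [Fintype ι] (c : ℝ) (x : ι → ℝ) :
    Real.exp (-‖WithLp.toLp 2 x‖ ^ 2 / c) = ∏ i, Real.exp (-x i ^ 2 / c) := by
  rw [EuclideanSpace.real_norm_sq_eq, ← Real.exp_sum, neg_div, Finset.sum_div,
    ← Finset.sum_neg_distrib]
  simp [neg_div]

theorem prekopa_leindler_euclideanSpace {n : ℕ} {s t : ℝ} (hs : 0 ≤ s) (ht : 0 ≤ t)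
    (hst : s + t = 1) {c : ℝ} (hc : 0 < c) {f g h : EuclideanSpace ℝ (Fin n) → ℝ}
    (hf : Measurable f) (hg : Measurable g) (hh : Measurable h)
    (hf₀ : 0 ≤ f) (hg₀ : 0 ≤ g) (hh₀ : 0 ≤ h) {Mf Mg Mh : ℝ}
    (hfM : ∀ x, f x ≤ Mf * Real.exp (-‖x‖ ^ 2 / c))
    (hgM : ∀ x, g x ≤ Mg * Real.exp (-‖x‖ ^ 2 / c))
    (hhM : ∀ x, h x ≤ Mh * Real.exp (-‖x‖ ^ 2 / c))
    (hfgh : ∀ x y, f x ^ s * g y ^ t ≤ h (s • x + t • y)) :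
    (∫ x, f x) ^ s * (∫ x, g x) ^ t ≤ ∫ x, h x := by
  have hw := integrable_exp_neg_sq_div hc
  have hw₀ : 0 ≤ fun u : ℝ => Real.exp (-u ^ 2 / c) := fun _ => (Real.exp_pos _).le
  have hwb : BddAbove (range fun u : ℝ => Real.exp (-u ^ 2 / c)) :=
    ⟨1, by rintro _ ⟨u, rfl⟩; simpa using exp_neg_norm_sq_div_le_one hc.le u⟩
  have hemb := (MeasurableEquiv.toLp 2 (Fin n → ℝ)).measurableEmbedding
  rw [← (PiLp.volume_preserving_toLp _).integral_comp hemb f,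
    ← (PiLp.volume_preserving_toLp _).integral_comp hemb g,
    ← (PiLp.volume_preserving_toLp _).integral_comp hemb h]
  have hdom : ∀ {p : EuclideanSpace ℝ (Fin n) → ℝ} {M : ℝ},
      (∀ x, p x ≤ M * Real.exp (-‖x‖ ^ 2 / c)) →
      ∀ x : Fin n → ℝ, p (WithLp.toLp 2 x) ≤ M * ∏ i, Real.exp (-x i ^ 2 / c) :=
    fun hpM x => exp_neg_norm_toLp_sq_div c x ▸ hpM _
  have hint : ∀ {p : EuclideanSpace ℝ (Fin n) → ℝ} {M : ℝ}, Measurable p → 0 ≤ p →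
      (∀ x, p x ≤ M * Real.exp (-‖x‖ ^ 2 / c)) →
      Integrable fun x : Fin n → ℝ => p (WithLp.toLp 2 x) := fun hp hp₀ hpM =>
    integrable_of_le_mul_prod hw (hp.comp hemb.measurable) (fun _ => hp₀ _) (hdom hpM)
  rcases hs.eq_or_lt with rfl | hs
  · obtain rfl : t = 1 := by linarith
    rw [Real.rpow_zero, Real.rpow_one, one_mul]
    exact integral_mono (hint hg hg₀ hgM) (hint hh hh₀ hhM) fun y => by simpa using hfgh 0 _
  rcases ht.eq_or_lt with rfl | ht
  · obtain rfl : s = 1 := by linarith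
    rw [Real.rpow_zero, Real.rpow_one, mul_one]
    exact integral_mono (hint hf hf₀ hfM) (hint hh hh₀ hhM) fun x => by simpa using hfgh _ 0
  exact prekopa_leindler_pi hs ht hst hw hw₀ hwb (hf.comp hemb.measurable)
    (hg.comp hemb.measurable) (hh.comp hemb.measurable) (fun _ => hf₀ _) (fun _ => hg₀ _)
    (fun _ => hh₀ _) (hdom hfM) (hdom hgM) (hdom hhM) fun x y => hfgh _ _

theorem isLogConcave_exp_neg_norm_sq_div {E : Type*} [NormedAddCommGroup E] [NormedSpace ℝ E]
    {c : ℝ} (hc : 0 ≤ c) : IsLogConcave fun x : E => Real.exp (-‖x‖ ^ 2 / c) := by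
  intro x y s t hs ht hst
  have hconv := ((convexOn_univ_norm (E := E)).pow (fun _ _ => norm_nonneg _) 2).2
    (mem_univ x) (mem_univ y) hs ht hst
  simp only [Pi.pow_apply, smul_eq_mul] at hconv
  rw [← Real.exp_mul, ← Real.exp_mul, ← Real.exp_add, Real.exp_le_exp]
  calc -‖x‖ ^ 2 / c * s + -‖y‖ ^ 2 / c * t = -(s * ‖x‖ ^ 2 + t * ‖y‖ ^ 2) / c := by ring
    _ ≤ -‖s • x + t • y‖ ^ 2 / c := by gcongr

theorem mul_rpow_mul_mul_rpow_le {a b c a' b' c' s t : ℝ} (ha : 0 ≤ a) (hb : 0 ≤ b)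
    (ha' : 0 ≤ a') (hb' : 0 ≤ b') (h : a ^ s * b ^ t ≤ c) (h' : a' ^ s * b' ^ t ≤ c') :
    (a * a') ^ s * (b * b') ^ t ≤ c * c' := by
  rw [Real.mul_rpow ha ha', Real.mul_rpow hb hb', mul_mul_mul_comm]
  exact mul_le_mul h h' (by positivity) ((by positivity : 0 ≤ a ^ s * b ^ t).trans h)

theorem IsLogConcave.mul_rpow_mul_rpow_le {E : Type*} [AddCommGroup E] [Module ℝ E] {K : E → ℝ}
    (hK : IsLogConcave K) {s t : ℝ} (hs : 0 ≤ s) (ht : 0 ≤ t) (hst : s + t = 1) {F G H : E → ℝ}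
    (hF : 0 ≤ F) (hG : 0 ≤ G) (hK₀ : 0 ≤ K) (hFGH : ∀ u v, F u ^ s * G v ^ t ≤ H (s • u + t • v))
    {r : ℝ} (x y u v : E) :
    (F u * K (r • u - x)) ^ s * (G v * K (r • v - y)) ^ t ≤
      H (s • u + t • v) * K (r • (s • u + t • v) - (s • x + t • y)) := by
  have hlin : s • (r • u - x) + t • (r • v - y) = r • (s • u + t • v) - (s • x + t • y) := by
    module
  exact mul_rpow_mul_mul_rpow_le (hF u) (hG v) (hK₀ _) (hK₀ _) (hFGH u v)
    (hlin ▸ hK _ _ s t hs ht hst)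

/-- Detailed balance of the Mehler kernel with respect to the Gaussian weight. -/
theorem exp_mehler_mul_exp_neg_norm_sq {E : Type*} [NormedAddCommGroup E] [InnerProductSpace ℝ E]
    {r : ℝ} (hr : r ^ 2 ≠ 1) (u z : E) :
    Real.exp (-‖u - r • z‖ ^ 2 / (2 * (1 - r ^ 2))) * Real.exp (-‖z‖ ^ 2 / 2) =
      Real.exp (-‖u‖ ^ 2 / 2) * Real.exp (-‖r • u - z‖ ^ 2 / (2 * (1 - r ^ 2))) := by
  have hr' : 1 - r ^ 2 ≠ 0 := sub_ne_zero.2 hr.symm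
  rw [← Real.exp_add, ← Real.exp_add, norm_sub_sq_real, norm_sub_sq_real, norm_smul, norm_smul,
    real_inner_smul_left, real_inner_smul_right, real_inner_comm, mul_pow, mul_pow,
    Real.norm_eq_abs, sq_abs]
  congr 1
  field_simp
  ring

theorem ornsteinUhlenbeck_mul_exp_neg_norm_sq {n : ℕ} {τ : ℝ} (hτ : τ ≠ 0)
    (f : EuclideanSpace ℝ (Fin n) → ℝ) (x : EuclideanSpace ℝ (Fin n)) :
    ornsteinUhlenbeck τ f x * Real.exp (-‖x‖ ^ 2 / 2) =
      (2 * Real.pi * (1 - Real.exp (-2 * τ))) ^ (-(n : ℝ) / 2) *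
        ∫ u, f u * Real.exp (-‖u‖ ^ 2 / 2) *
          Real.exp (-‖Real.exp (-τ) • u - x‖ ^ 2 / (2 * (1 - Real.exp (-2 * τ)))) := by
  have hsq : Real.exp (-2 * τ) = Real.exp (-τ) ^ 2 := by rw [← Real.exp_nat_mul]; ring_nf
  have hr : Real.exp (-τ) ^ 2 ≠ 1 := by
    rw [← hsq, Ne, Real.exp_eq_one_iff]
    exact mul_ne_zero (by norm_num) hτ
  rw [ornsteinUhlenbeck, mul_assoc, ← integral_mul_const]
  congr 2 with u
  rw [hsq, mul_assoc, exp_mehler_mul_exp_neg_norm_sq hr, mul_assoc]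

/-- The Gaussian Prékopa–Leindler condition on test functions is
preserved by the Ornstein–Uhlenbeck semigroup. -/
theorem ornsteinUhlenbeck_preserves_gaussian_prekopa_condition {n : ℕ}
    (s t : ℝ) (hs : 0 ≤ s) (ht : 0 ≤ t) (hst : s + t = 1)
    (a b c : EuclideanSpace ℝ (Fin n) → ℝ)
    (ha : Measurable a) (hb : Measurable b) (hc : Measurable c)
    (ha0 : ∀ x, 0 ≤ a x) (hb0 : ∀ x, 0 ≤ b x) (hc0 : ∀ x, 0 ≤ c x)
    (hab : ∃ C, ∀ x, a x ≤ C) (hbb : ∃ C, ∀ x, b x ≤ C) (hcb : ∃ C, ∀ x, c x ≤ C)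
    (hyp : ∀ x y : EuclideanSpace ℝ (Fin n),
      (b x * Real.exp (-‖x‖ ^ 2 / 2)) ^ s * (c y * Real.exp (-‖y‖ ^ 2 / 2)) ^ t ≤
        a (s • x + t • y) * Real.exp (-‖s • x + t • y‖ ^ 2 / 2)) :
    ∀ τ : ℝ, 0 < τ → ∀ x y : EuclideanSpace ℝ (Fin n),
      (ornsteinUhlenbeck τ b x * Real.exp (-‖x‖ ^ 2 / 2)) ^ s *
          (ornsteinUhlenbeck τ c y * Real.exp (-‖y‖ ^ 2 / 2)) ^ t ≤
        ornsteinUhlenbeck τ a (s • x + t • y) *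
          Real.exp (-‖s • x + t • y‖ ^ 2 / 2) := by
  intro τ hτ x y
  obtain ⟨Ca, hCa⟩ := hab
  obtain ⟨Cb, hCb⟩ := hbb
  obtain ⟨Cc, hCc⟩ := hcb
  have hq : 0 < 2 * (1 - Real.exp (-2 * τ)) := by
    linarith [Real.exp_lt_one_iff.2 (by linarith : -2 * τ < 0)]
  have hC₀ : 0 < (2 * Real.pi * (1 - Real.exp (-2 * τ))) ^ (-(n : ℝ) / 2) :=
    Real.rpow_pos_of_pos (by nlinarith [Real.pi_pos]) _
  set K : EuclideanSpace ℝ (Fin n) → ℝ :=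
    fun w => Real.exp (-‖w‖ ^ 2 / (2 * (1 - Real.exp (-2 * τ))))
  have hK₀ : 0 ≤ K := fun _ => (Real.exp_pos _).le
  have hK : IsLogConcave K := isLogConcave_exp_neg_norm_sq_div hq.le
  have hweight : ∀ {p : EuclideanSpace ℝ (Fin n) → ℝ}, (∀ u, 0 ≤ p u) →
      0 ≤ fun u => p u * Real.exp (-‖u‖ ^ 2 / 2) := fun hp₀ u => by have := hp₀ u; positivity
  have hdom : ∀ {p : EuclideanSpace ℝ (Fin n) → ℝ} {C : ℝ}, (∀ u, p u ≤ C) → (∀ u, 0 ≤ p u) →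
      ∀ z u, p u * Real.exp (-‖u‖ ^ 2 / 2) * K (Real.exp (-τ) • u - z) ≤
        C * Real.exp (-‖u‖ ^ 2 / 2) := fun hpC hp₀ z u =>
    (mul_le_of_le_one_right (hweight hp₀ u) (exp_neg_norm_sq_div_le_one hq.le _)).trans
      (mul_le_mul_of_nonneg_right (hpC u) (Real.exp_pos _).le)
  rw [ornsteinUhlenbeck_mul_exp_neg_norm_sq hτ.ne', ornsteinUhlenbeck_mul_exp_neg_norm_sq hτ.ne',
    ornsteinUhlenbeck_mul_exp_neg_norm_sq hτ.ne']
  exact mul_rpow_mul_mul_rpow_le hC₀.le hC₀.le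
    (integral_nonneg fun u => mul_nonneg (hweight hb0 u) (hK₀ _))
    (integral_nonneg fun u => mul_nonneg (hweight hc0 u) (hK₀ _))
    (by rw [← Real.rpow_add hC₀, hst, Real.rpow_one])
    (prekopa_leindler_euclideanSpace hs ht hst two_pos (by fun_prop) (by fun_prop) (by fun_prop)
      (fun u => mul_nonneg (hweight hb0 u) (hK₀ _)) (fun u => mul_nonneg (hweight hc0 u) (hK₀ _))
      (fun u => mul_nonneg (hweight ha0 u) (hK₀ _)) (hdom hCb hb0 x) (hdom hCc hc0 y)
      (hdom hCa ha0 _) (hK.mul_rpow_mul_rpow_le hs ht hst (hweight hb0) (hweight hc0) hK₀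
        (H := fun w => a w * Real.exp (-‖w‖ ^ 2 / 2)) hyp x y))
end
end
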